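/- arXiv:0812.0823 — 12 statements merged into one kernel-verified Lean document; each statement's English description precedes it below -/
import Mathlib

section
/- Let w_1,...,w_r be vectors in ℕ^n such that the set {w_1,...,w_r} is downward closed in ℕ^n (i.e., if 0 ≤ α ≤ w_i coordinatewise for some i and α ∈ ℕ^n, then α ∈ {w_1,...,w_r}). Then conv(w_1,...,w_r) = ℝ₊^n ∩ (conv(w_1,...,w_r) + cone(-e_1,...,-e_n)), i.e., the convex hull equals the set of nonnegative vectors that lie below some convex combination of the w_i. -/
/-!
Downward closedness makes the set of points `wᵢ` closed under setting a coordinate to zero, and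
this passes to the convex hull since zeroing a coordinate is linear. Lowering one coordinate of a
point `y` of the hull to any `c ∈ [0, y j]` then stays in the hull (the result lies on the segment
from `y` to `y` with that coordinate zeroed), so lowering the coordinates one at a time shows that
the hull contains every nonnegative point below one of its points. As `cone(-e₁,…,-eₙ)` is the
nonpositive orthant, this is the nontrivial inclusion.
-/

/-- The cone generated by the negative unit vectors `-e₁,…,-eₙ` in `ℝⁿ`. -/
def negUnitCone (n : ℕ) : Set (Fin n → ℝ) :=
  {z | ∃ δ : Fin n → ℝ, (∀ j, 0 ≤ δ j) ∧ z = ∑ j, δ j • (-(Pi.single j 1 : Fin n → ℝ))}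

open Function Set

theorem LinearMap.mapsTo_convexHull {𝕜 E F : Type*} [Semiring 𝕜] [PartialOrder 𝕜]
    [AddCommMonoid E] [AddCommMonoid F] [Module 𝕜 E] [Module 𝕜 F] (f : E →ₗ[𝕜] F)
    {s : Set E} {t : Set F} (h : MapsTo f s t) :
    MapsTo f (convexHull 𝕜 s) (convexHull 𝕜 t) := by
  rw [mapsTo_iff_image_subset, f.image_convexHull]
  exact convexHull_mono h.image_subset

section Orthant

variable {ι : Type*} [DecidableEq ι] {W : Set (ι → ℝ)}

theorem mapsTo_update_zero_convexHull {j : ι} (hW : MapsTo (update · j 0) W W) :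
    MapsTo (update · j 0) (convexHull ℝ W) (convexHull ℝ W) := by
  let f : (ι → ℝ) →ₗ[ℝ] ι → ℝ := LinearMap.pi (update LinearMap.proj j 0)
  have hf : ⇑f = (update · j 0) :=
    funext fun x ↦ funext fun k ↦ LinearMap.update_apply _ _ _ _ _
  exact hf ▸ f.mapsTo_convexHull (hf ▸ hW)

theorem update_mem_convexHull_of_le {j : ι} (hW : MapsTo (update · j 0) W W)
    {y : ι → ℝ} (hy : y ∈ convexHull ℝ W) {c : ℝ} (hc : 0 ≤ c) (hcy : c ≤ y j) :
    update y j c ∈ convexHull ℝ W := by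
  have hy₀ := mapsTo_update_zero_convexHull hW hy
  obtain hyj | hyj := (hc.trans hcy).eq_or_lt
  · rwa [le_antisymm (hyj ▸ hcy) hc]
  set t := c / y j
  have hupdate : update y j c = t • y + (1 - t) • update y j 0 := by
    ext k
    rcases eq_or_ne k j with rfl | hk
    · simp [t, hyj.ne']
    · simp only [update_of_ne hk, Pi.add_apply, Pi.smul_apply, smul_eq_mul]
      ring
  rw [hupdate]
  exact convex_convexHull ℝ W hy hy₀ (div_nonneg hc hyj.le) (by simp [t, div_le_one hyj, hcy])
    (by ring)

theorem mem_convexHull_of_nonneg_of_le [Fintype ι] (hW : ∀ j, MapsTo (update · j 0) W W)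
    {x y : ι → ℝ} (hy : y ∈ convexHull ℝ W) (hx : 0 ≤ x) (hxy : x ≤ y) :
    x ∈ convexHull ℝ W := by
  suffices ∀ s : Finset ι, s.piecewise x y ∈ convexHull ℝ W by simpa using this Finset.univ
  intro s
  induction s using Finset.induction_on with
  | empty => simpa using hy
  | insert j s hj ih =>
    rw [Finset.piecewise_insert]
    exact update_mem_convexHull_of_le (hW j) ih (hx j) (by simpa [hj] using hxy j)

end Orthant

theorem mem_negUnitCone_iff {n : ℕ} {z : Fin n → ℝ} : z ∈ negUnitCone n ↔ z ≤ 0 := by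
  have hsum (δ : Fin n → ℝ) : ∑ j, δ j • (-(Pi.single j 1 : Fin n → ℝ)) = -δ := by
    simp [← Pi.single_smul', Finset.univ_sum_single]
  constructor
  · rintro ⟨δ, hδ, rfl⟩
    rw [hsum]
    exact fun j ↦ neg_nonpos.2 (hδ j)
  · exact fun hz ↦ ⟨-z, fun j ↦ neg_nonneg.2 (hz j), by rw [hsum, neg_neg]⟩

theorem mapsTo_update_zero_of_downwardClosed {ι κ : Type*} [DecidableEq κ]
    (w : ι → κ → ℕ) (hdc : ∀ α : κ → ℕ, (∃ i, α ≤ w i) → ∃ i, α = w i) (j : κ) :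
    MapsTo (update · j 0) {x : κ → ℝ | ∃ i, x = fun k ↦ (w i k : ℝ)}
      {x : κ → ℝ | ∃ i, x = fun k ↦ (w i k : ℝ)} := by
  rintro _ ⟨i, rfl⟩
  obtain ⟨i', hi'⟩ :=
    hdc (update (w i) j 0) ⟨i, update_le_iff.2 ⟨Nat.zero_le _, fun _ _ ↦ le_rfl⟩⟩
  refine ⟨i', funext fun k ↦ ?_⟩
  simp [← hi', apply_update (fun _ (m : ℕ) ↦ (m : ℝ))]

/-- if `{w₁,…,w_r} ⊆ ℕⁿ` is downward closed, then
`conv(w₁,…,w_r) = ℝ₊ⁿ ∩ (conv(w₁,…,w_r) + ℝ₊{-e₁,…,-eₙ})`. -/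
theorem stmt0 (n r : ℕ) (w : Fin r → Fin n → ℕ)
    (hdc : ∀ α : Fin n → ℕ, (∃ i, α ≤ w i) → ∃ i, α = w i) :
    convexHull ℝ {x : Fin n → ℝ | ∃ i, x = fun j => (w i j : ℝ)} =
      {x : Fin n → ℝ | 0 ≤ x} ∩
        {x | ∃ y ∈ convexHull ℝ {x : Fin n → ℝ | ∃ i, x = fun j => (w i j : ℝ)},
          ∃ z ∈ negUnitCone n, x = y + z} := by
  set W := {x : Fin n → ℝ | ∃ i, x = fun j ↦ (w i j : ℝ)}
  have hW_nonneg : W ⊆ Ici 0 := by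
    rintro _ ⟨i, rfl⟩ j
    positivity
  ext x
  simp only [mem_inter_iff, mem_negUnitCone_iff]
  constructor
  · exact fun hx ↦
      ⟨convexHull_min hW_nonneg (convex_Ici 0) hx, x, hx, 0, le_rfl, (add_zero x).symm⟩
  · rintro ⟨hx, y, hy, z, hz, rfl⟩
    exact mem_convexHull_of_nonneg_of_le (mapsTo_update_zero_of_downwardClosed w hdc) hy hx
      (add_le_of_nonpos_right hz)
end

section
/- Let v_1,...,v_q ∈ ℕ^n be the columns of a nonnegative integer matrix A and let Q = {x ∈ ℝ^n : x ≥ 0, xA ≥ 1}. Then the blocking polyhedron B(Q) = {z ≥ 0 : ⟨z,x⟩ ≥ 1 for all x ∈ Q} equals ℝ₊^n + conv(v_1,...,v_q). -/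
/-!
The columns `vⱼ` lie in `B(Q)` by the very definition of `Q`, and `B(Q)` is convex and closed under
adding nonnegative vectors, which gives `ℝ₊ⁿ + conv(vⱼ) ⊆ B(Q)`. Conversely `D = ℝ₊ⁿ + conv(vⱼ)` is
closed and convex, so a nonnegative `z ∉ D` is strictly separated from `D` by a linear functional
`y`. Since `D` is closed upwards, `y ≥ 0`; normalizing, `⟨y, d⟩ > 1` on `D` and `⟨y, z⟩ < 1`. As
every `vⱼ ∈ D`, `y ∈ Q`, so `z ∉ B(Q)`.
-/

open Pointwise

/-- The blocking polyhedron of a set `Q ⊆ ℝⁿ`. -/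
def blocker {n : ℕ} (Q : Set (Fin n → ℝ)) : Set (Fin n → ℝ) :=
  {z | (∀ i, 0 ≤ z i) ∧ ∀ x ∈ Q, 1 ≤ ∑ i, z i * x i}

section Blocker

variable {n : ℕ} {Q : Set (Fin n → ℝ)}

theorem mem_blocker_iff {z : Fin n → ℝ} : z ∈ blocker Q ↔ 0 ≤ z ∧ ∀ x ∈ Q, 1 ≤ z ⬝ᵥ x :=
  Iff.rfl

theorem convex_blocker (Q : Set (Fin n → ℝ)) : Convex ℝ (blocker Q) := by
  simp only [Convex, StarConvex, mem_blocker_iff]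
  rintro z ⟨hz0, hz⟩ w ⟨hw0, hw⟩ a b ha hb hab
  refine ⟨add_nonneg (smul_nonneg ha hz0) (smul_nonneg hb hw0), fun x hx => ?_⟩
  rw [add_dotProduct, smul_dotProduct, smul_dotProduct, smul_eq_mul, smul_eq_mul]
  nlinarith [hz x hx, hw x hx]

theorem add_mem_blocker (hQ : ∀ x ∈ Q, 0 ≤ x) {z w : Fin n → ℝ} (hz : z ∈ blocker Q)
    (hw : 0 ≤ w) : z + w ∈ blocker Q := by
  refine mem_blocker_iff.2 ⟨add_nonneg hz.1 hw, fun x hx => ?_⟩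
  rw [add_dotProduct]
  linarith [(mem_blocker_iff.1 hz).2 x hx, dotProduct_nonneg_of_nonneg hw (hQ x hx)]

theorem Ici_zero_add_convexHull_subset_blocker (hQ : ∀ x ∈ Q, 0 ≤ x) {V : Set (Fin n → ℝ)}
    (hV : V ⊆ blocker Q) : Set.Ici 0 + convexHull ℝ V ⊆ blocker Q := by
  refine Set.add_subset_iff.2 fun w hw c hc => ?_
  rw [add_comm]
  exact add_mem_blocker hQ (convexHull_min hV (convex_blocker Q) hc) hw

end Blocker

theorem add_mem_Ici_zero_add {E : Type*} [AddCommMonoid E] [PartialOrder E]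
    [IsOrderedAddMonoid E] {s : Set E} {d w : E} (hd : d ∈ Set.Ici 0 + s) (hw : 0 ≤ w) :
    d + w ∈ Set.Ici 0 + s := by
  obtain ⟨v, hv, c, hc, rfl⟩ := hd
  rw [add_right_comm]
  exact Set.add_mem_add (add_nonneg hv hw) hc

theorem nonneg_of_forall_lt_add_mul {K : Type*} [Field K] [LinearOrder K] [IsStrictOrderedRing K]
    {a b u : K} (h : ∀ t, 0 ≤ t → u < a + t * b) : 0 ≤ b := by
  by_contra! hb
  have hau : u < a := by simpa using h 0 le_rfl
  have := h ((a - u) / -b) (div_nonneg (by linarith) (by linarith))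
  rw [div_mul_eq_mul_div, div_neg, mul_div_cancel_right₀ _ hb.ne] at this
  linarith

theorem LinearMap.apply_eq_dotProduct {R ι : Type*} [CommSemiring R] [Fintype ι] [DecidableEq ι]
    (f : (ι → R) →ₗ[R] R) (y : ι → R) :
    f y = y ⬝ᵥ fun i => f fun j => if i = j then 1 else 0 := by
  simpa [dotProduct, smul_eq_mul] using f.pi_apply_eq_sum_univ y

theorem exists_nonneg_dotProduct_lt_one {ι : Type*} [Fintype ι] {D : Set (ι → ℝ)}
    (hDconv : Convex ℝ D) (hDclosed : IsClosed D) (hDup : ∀ d ∈ D, ∀ w, 0 ≤ w → d + w ∈ D)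
    {z : ι → ℝ} (hz : 0 ≤ z) (hzD : z ∉ D) :
    ∃ y, 0 ≤ y ∧ z ⬝ᵥ y < 1 ∧ ∀ d ∈ D, 1 < d ⬝ᵥ y := by
  classical
  obtain rfl | ⟨d₀, hd₀⟩ := D.eq_empty_or_nonempty
  · exact ⟨0, le_rfl, by simp, by simp⟩
  obtain ⟨f, u, hfz, hfD⟩ := geometric_hahn_banach_point_closed hDconv hDclosed hzD
  set c : ι → ℝ := fun i => f fun j => if i = j then 1 else 0
  have hf : ∀ y, f y = y ⬝ᵥ c := f.toLinearMap.apply_eq_dotProduct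
  have hc : 0 ≤ c := fun i => nonneg_of_forall_lt_add_mul (a := f d₀) fun t ht => by
    have := hfD _ (hDup d₀ hd₀ (t • fun j => if i = j then 1 else 0) fun j => by
      by_cases h : i = j <;> simp [h, ht])
    rwa [map_add, map_smul, smul_eq_mul] at this
  have hu : 0 < u := (hf z ▸ dotProduct_nonneg_of_nonneg hz hc).trans_lt hfz
  refine ⟨u⁻¹ • c, smul_nonneg (inv_nonneg.2 hu.le) hc, ?_, fun d hd => ?_⟩
  · rw [dotProduct_smul, smul_eq_mul, ← hf, inv_mul_lt_one₀ hu]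
    exact hfz
  · rw [dotProduct_smul, smul_eq_mul, ← hf, one_lt_inv_mul₀ hu]
    exact hfD d hd

/-- for a nonnegative integer matrix `A` with columns `v₁,…,v_q`, the blocking
polyhedron of the covering polyhedron `Q = {x ≥ 0 : xA ≥ 1}` equals
`ℝ₊ⁿ + conv(v₁,…,v_q)` (Minkowski sum). -/
theorem stmt2 (n q : ℕ) (A : Matrix (Fin n) (Fin q) ℕ) :
    blocker {x : Fin n → ℝ | (∀ i, 0 ≤ x i) ∧ ∀ j, 1 ≤ ∑ i, x i * (A i j : ℝ)} =
      {x : Fin n → ℝ | ∀ i, 0 ≤ x i} +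
        convexHull ℝ {x : Fin n → ℝ | ∃ j, x = fun i => (A i j : ℝ)} := by
  set Q := {x : Fin n → ℝ | (∀ i, 0 ≤ x i) ∧ ∀ j, 1 ≤ ∑ i, x i * (A i j : ℝ)}
  set V := {x : Fin n → ℝ | ∃ j, x = fun i => (A i j : ℝ)}
  show blocker Q = Set.Ici 0 + convexHull ℝ V
  have hVQ : V ⊆ blocker Q := by
    rintro _ ⟨j, rfl⟩
    refine mem_blocker_iff.2 ⟨fun i => Nat.cast_nonneg _, fun x hx => ?_⟩
    rw [dotProduct_comm]
    exact hx.2 j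
  have hVfin : V.Finite :=
    (Set.finite_range fun j i => (A i j : ℝ)).subset fun _ ⟨j, hj⟩ => ⟨j, hj.symm⟩
  refine subset_antisymm (fun z hz => ?_)
    (Ici_zero_add_convexHull_subset_blocker (fun x hx => hx.1) hVQ)
  by_contra hzD
  obtain ⟨y, hy0, hzy, hyD⟩ := exists_nonneg_dotProduct_lt_one
    ((convex_Ici 0).add (convex_convexHull ℝ V))
    (isClosed_Ici.add_right_of_isCompact (hVfin.isCompact_convexHull ℝ))
    (fun _ hd _ hw => add_mem_Ici_zero_add hd hw) hz.1 hzD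
  have hyQ : y ∈ Q := ⟨hy0, fun j => by
    have := hyD _ (Set.add_mem_add (Set.mem_Ici.2 le_rfl) (subset_convexHull ℝ V ⟨j, rfl⟩))
    rw [zero_add, dotProduct_comm] at this
    exact this.le⟩
  exact (hz.2 y hyQ).not_gt hzy
end

section
/- Let v_1,...,v_q ∈ {0,1}^n, let v_i^* = 1 - v_i, and set A' = {e_1,...,e_n,(v_1,1),...,(v_q,1)} ⊆ ℤ^{n+1} and Γ = {-e_1,...,-e_n,(v_1^*,1),...,(v_q^*,1)} ⊆ ℤ^{n+1}. Then A' is a Hilbert basis if and only if Γ is a Hilbert basis. -/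
/-- A finite family `u : ι → ℤᵐ` is a Hilbert basis if the semigroup of nonnegative
integer combinations of the `u i` equals the set of lattice points of the real cone
they generate, i.e. `ℕH = ℝ₊H ∩ ℤᵐ`. -/
def IsHilbertBasisFam {m : ℕ} {ι : Type*} [Fintype ι] (u : ι → Fin m → ℤ) : Prop :=
  ∀ z : Fin m → ℤ,
    (∃ c : ι → ℕ, z = ∑ i, c i • u i) ↔
      ∃ t : ι → ℝ, (∀ i, 0 ≤ t i) ∧
        (fun j => (z j : ℝ)) = ∑ i, t i • fun j => ((u i j : ℝ))

noncomputable section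

variable (n : ℕ)

/-- The linear involution `(x, t) ↦ (t·1 - x, t)` on `R^{n+1}`. -/
def phiL (R : Type*) [CommRing R] : (Fin (n+1) → R) →ₗ[R] (Fin (n+1) → R) where
  toFun z := Fin.snoc (fun j : Fin n => z (Fin.last n) - z j.castSucc) (z (Fin.last n))
  map_add' x y := by
    funext j
    refine Fin.lastCases ?_ (fun j => ?_) j <;>
      simp [Fin.snoc_last, Fin.snoc_castSucc] <;> ring
  map_smul' c x := by
    funext j
    refine Fin.lastCases ?_ (fun j => ?_) j <;>
      simp [Fin.snoc_last, Fin.snoc_castSucc, mul_sub]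

lemma phiL_invol {R : Type*} [CommRing R] (z : Fin (n+1) → R) :
    phiL n R (phiL n R z) = z := by
  funext j
  refine Fin.lastCases ?_ (fun j => ?_) j <;>
    simp [phiL, Fin.snoc_last, Fin.snoc_castSucc]

lemma phiL_cast (z : Fin (n+1) → ℤ) :
    (fun j => ((phiL n ℤ z j : ℤ) : ℝ)) = phiL n ℝ (fun j => (z j : ℝ)) := by
  funext j
  refine Fin.lastCases ?_ (fun j => ?_) j <;>
    simp [phiL, Fin.snoc_last, Fin.snoc_castSucc]

lemma transfer {ι : Type*} [Fintype ι] (u : ι → Fin (n+1) → ℤ)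
    (hu : IsHilbertBasisFam u) : IsHilbertBasisFam (fun i => phiL n ℤ (u i)) := by
  intro z
  constructor
  · rintro ⟨c, hc⟩
    have h1 : phiL n ℤ z = ∑ i, c i • u i := by
      rw [hc, map_sum]
      exact Finset.sum_congr rfl fun i _ => by rw [map_nsmul, phiL_invol]
    obtain ⟨t, ht, heq⟩ := (hu (phiL n ℤ z)).1 ⟨c, h1⟩
    refine ⟨t, ht, ?_⟩
    have h2 := congrArg (phiL n ℝ) heq
    rw [map_sum] at h2
    rw [phiL_cast, phiL_invol] at h2
    rw [h2]
    exact Finset.sum_congr rfl fun i _ => by rw [map_smul, phiL_cast]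
  · rintro ⟨t, ht, heq⟩
    have h2 := congrArg (phiL n ℝ) heq
    rw [map_sum] at h2
    have h3 : (fun j => ((phiL n ℤ z j : ℤ) : ℝ)) = ∑ i, t i • fun j => ((u i j : ℝ)) := by
      rw [phiL_cast, h2]
      exact Finset.sum_congr rfl fun i _ => by
        rw [map_smul, phiL_cast, phiL_invol]
    obtain ⟨c, hc⟩ := (hu (phiL n ℤ z)).2 ⟨t, ht, h3⟩
    refine ⟨c, ?_⟩
    have h4 := congrArg (phiL n ℤ) hc
    rw [phiL_invol, map_sum] at h4
    rw [h4]
    exact Finset.sum_congr rfl fun i _ => by rw [map_nsmul]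

lemma transfer_iff {ι : Type*} [Fintype ι] (u : ι → Fin (n+1) → ℤ) :
    IsHilbertBasisFam u ↔ IsHilbertBasisFam (fun i => phiL n ℤ (u i)) := by
  constructor
  · exact transfer n u
  · intro h
    have := transfer n _ h
    simpa [phiL_invol] using this

end

/-- for `{0,1}`-vectors `v₁,…,v_q ∈ ℕⁿ` with `vᵢ* = 1 - vᵢ`, the set
`A' = {e₁,…,eₙ,(v₁,1),…,(v_q,1)}` is a Hilbert basis iff
`Γ = {-e₁,…,-eₙ,(v₁*,1),…,(v_q*,1)}` is a Hilbert basis. -/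
theorem stmt3 (n q : ℕ) (v : Fin q → Fin n → ℕ) (h01 : ∀ k j, v k j ≤ 1) :
    IsHilbertBasisFam
      (Sum.elim (fun i : Fin n => (Fin.snoc (Pi.single i 1 : Fin n → ℤ) 0 : Fin (n+1) → ℤ))
        (fun k : Fin q => (Fin.snoc (fun j => (v k j : ℤ)) 1 : Fin (n+1) → ℤ))) ↔
    IsHilbertBasisFam
      (Sum.elim (fun i : Fin n => (Fin.snoc (-(Pi.single i 1) : Fin n → ℤ) 0 : Fin (n+1) → ℤ))
        (fun k : Fin q => (Fin.snoc (fun j => 1 - (v k j : ℤ)) 1 : Fin (n+1) → ℤ))) := by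
  rw [transfer_iff]
  have : (fun i => phiL n ℤ
      (Sum.elim (fun i : Fin n => (Fin.snoc (Pi.single i 1 : Fin n → ℤ) 0 : Fin (n+1) → ℤ))
        (fun k : Fin q => (Fin.snoc (fun j => (v k j : ℤ)) 1 : Fin (n+1) → ℤ)) i)) =
      (Sum.elim (fun i : Fin n => (Fin.snoc (-(Pi.single i 1) : Fin n → ℤ) 0 : Fin (n+1) → ℤ))
        (fun k : Fin q => (Fin.snoc (fun j => 1 - (v k j : ℤ)) 1 : Fin (n+1) → ℤ))) := by
    funext i
    cases i with
    | inl i =>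
      funext j
      refine Fin.lastCases ?_ (fun j => ?_) j <;>
        simp [phiL, Fin.snoc_last, Fin.snoc_castSucc]
    | inr k =>
      funext j
      refine Fin.lastCases ?_ (fun j => ?_) j <;>
        simp [phiL, Fin.snoc_last, Fin.snoc_castSucc]
  rw [this]
end

section
/- Let A be a {0,1}-matrix whose columns v_1,...,v_q are characteristic vectors of the edges of a clutter (no column's support contains another's), and let v_i^* = 1 - v_i. Then the system x ≥ 0, xA ≥ 1 has the integer rounding property if and only if the system x ≥ 0, xA^* ≤ 1 has the integer rounding property, where A^* is the matrix with columns v_1^*,...,v_q^*. -/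
/-- The system `x ≥ 0, xA ≥ 1` has the integer rounding property:
for every integral `a` for which the linear program
`max{⟨y,1⟩ : y ≥ 0, Ay ≤ a}` has a (finite, attained) maximum `m`, the integer program
`max{⟨y,1⟩ : y ∈ ℕ^q, Ay ≤ a}` has maximum `⌊m⌋`. -/
def RoundingGe {n q : ℕ} (A : Matrix (Fin n) (Fin q) ℕ) : Prop :=
  ∀ (a : Fin n → ℤ) (m : ℝ),
    IsGreatest {s : ℝ | ∃ y : Fin q → ℝ, (∀ k, 0 ≤ y k) ∧
        (∀ i, ∑ k, (A i k : ℝ) * y k ≤ (a i : ℝ)) ∧ s = ∑ k, y k} m →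
    IsGreatest {s : ℤ | ∃ y : Fin q → ℕ, (∀ i, ∑ k, (A i k : ℤ) * (y k : ℤ) ≤ a i) ∧
        s = ∑ k, (y k : ℤ)} ⌊m⌋

/-- The system `x ≥ 0, xA ≤ 1` has the integer rounding property:
for every integral `a` for which the linear program
`min{⟨y,1⟩ : y ≥ 0, Ay ≥ a}` has a (finite, attained) minimum `m`, the integer program
`min{⟨y,1⟩ : y ∈ ℕ^q, Ay ≥ a}` has minimum `⌈m⌉`. -/
def RoundingLe {n q : ℕ} (A : Matrix (Fin n) (Fin q) ℕ) : Prop :=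
  ∀ (a : Fin n → ℤ) (m : ℝ),
    IsLeast {s : ℝ | ∃ y : Fin q → ℝ, (∀ k, 0 ≤ y k) ∧
        (∀ i, (a i : ℝ) ≤ ∑ k, (A i k : ℝ) * y k) ∧ s = ∑ k, y k} m →
    IsLeast {s : ℤ | ∃ y : Fin q → ℕ, (∀ i, a i ≤ ∑ k, (A i k : ℤ) * (y k : ℤ)) ∧
        s = ∑ k, (y k : ℤ)} ⌈m⌉

open Finset

/-- reduce a nat vector to a prescribed smaller sum -/
lemma reduce_nat {q : ℕ} : ∀ (d : ℕ) (y : Fin q → ℕ) (s : ℕ), ∑ k, y k = s + d →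
    ∃ y' : Fin q → ℕ, (∀ k, y' k ≤ y k) ∧ ∑ k, y' k = s := by
  intro d
  induction d with
  | zero => exact fun y s h => ⟨y, fun k => le_rfl, by simpa using h⟩
  | succ d ih =>
    intro y s h
    have hne : ∑ k, y k ≠ 0 := by omega
    obtain ⟨k0, -, hk0⟩ := Finset.exists_ne_zero_of_sum_ne_zero hne
    have hk0' : 1 ≤ y k0 := Nat.one_le_iff_ne_zero.2 hk0
    set y1 := Function.update y k0 (y k0 - 1) with hy1
    have hsplit : y k0 + ∑ k ∈ Finset.univ.erase k0, y k = ∑ k, y k :=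
      Finset.add_sum_erase _ _ (Finset.mem_univ k0)
    have hsum1 : ∑ k, y1 k = (y k0 - 1) + ∑ k ∈ Finset.univ \ {k0}, y k := by
      rw [hy1, Finset.sum_update_of_mem (Finset.mem_univ k0)]
    have hsum1' : ∑ k, y1 k = s + d := by
      rw [hsum1, ← Finset.sdiff_singleton_eq_erase] at *
      omega
    obtain ⟨y', h1, h2⟩ := ih y1 s hsum1'
    refine ⟨y', fun k => ?_, h2⟩
    refine (h1 k).trans ?_
    rw [hy1]
    rcases eq_or_ne k k0 with rfl | hk
    · simp
    · simp [Function.update_of_ne hk]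

open Finset

lemma exists_isGreatest {n q : ℕ} (A : Matrix (Fin n) (Fin q) ℕ)
    (hne : ∀ j, ∃ i, A i j ≠ 0) (a : Fin n → ℤ) (y1 : Fin q → ℝ)
    (h1 : ∀ k, 0 ≤ y1 k) (h2 : ∀ i, ∑ k, (A i k : ℝ) * y1 k ≤ (a i : ℝ)) :
    ∃ m, IsGreatest {s : ℝ | ∃ y : Fin q → ℝ, (∀ k, 0 ≤ y k) ∧
        (∀ i, ∑ k, (A i k : ℝ) * y k ≤ (a i : ℝ)) ∧ s = ∑ k, y k} m := by
  set S : Set (Fin q → ℝ) :=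
    {y | (∀ k, 0 ≤ y k) ∧ ∀ i, ∑ k, (A i k : ℝ) * y k ≤ (a i : ℝ)} with hS
  have hclosed : IsClosed S := by
    have : S = (⋂ k, {y : Fin q → ℝ | 0 ≤ y k}) ∩
        ⋂ i, {y : Fin q → ℝ | ∑ k, (A i k : ℝ) * y k ≤ (a i : ℝ)} := by
      ext y; simp [hS, Set.mem_iInter]
    rw [this]
    refine IsClosed.inter (isClosed_iInter fun k => ?_) (isClosed_iInter fun i => ?_)
    · exact isClosed_le continuous_const (continuous_apply k)
    · exact isClosed_le (by continuity) continuous_const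
  set B : ℝ := ∑ i, (a i : ℝ) with hB
  have hcol : ∀ k, (1:ℝ) ≤ ∑ i, (A i k : ℝ) := by
    intro k
    obtain ⟨i, hi⟩ := hne k
    have h1' : (1:ℝ) ≤ (A i k : ℝ) := by exact_mod_cast Nat.one_le_iff_ne_zero.2 hi
    refine h1'.trans (Finset.single_le_sum (f := fun i => (A i k : ℝ)) (fun i _ => by positivity) (Finset.mem_univ i))
  have hsumB : ∀ y ∈ S, ∑ k, y k ≤ B := by
    intro y hy
    calc ∑ k, y k ≤ ∑ k, (∑ i, (A i k : ℝ)) * y k :=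
          Finset.sum_le_sum fun k _ => le_mul_of_one_le_left (hy.1 k) (hcol k)
      _ = ∑ i, ∑ k, (A i k : ℝ) * y k := by
          rw [Finset.sum_comm]; exact Finset.sum_congr rfl fun k _ => Finset.sum_mul ..
      _ ≤ B := Finset.sum_le_sum fun i _ => hy.2 i
  have hsub : S ⊆ Set.pi Set.univ fun _ => Set.Icc (0:ℝ) B := by
    intro y hy k _
    exact ⟨hy.1 k, (Finset.single_le_sum (fun k _ => hy.1 k) (Finset.mem_univ k)).trans
      (hsumB y hy)⟩
  have hcpt : IsCompact S :=
    (isCompact_univ_pi fun _ => isCompact_Icc).of_isClosed_subset hclosed hsub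
  have hSne : S.Nonempty := ⟨y1, h1, h2⟩
  obtain ⟨x, hxS, hx⟩ := hcpt.exists_isMaxOn hSne
    (continuous_finset_sum _ fun k _ => continuous_apply k).continuousOn
  refine ⟨∑ k, x k, ⟨x, hxS.1, hxS.2, rfl⟩, ?_⟩
  rintro s ⟨y, hy1, hy2, rfl⟩
  exact hx (Set.mem_setOf.2 ⟨hy1, hy2⟩)

lemma exists_isLeast {n q : ℕ} (A : Matrix (Fin n) (Fin q) ℕ)
    (b : Fin n → ℤ) (y1 : Fin q → ℝ)
    (h1 : ∀ k, 0 ≤ y1 k) (h2 : ∀ i, (b i : ℝ) ≤ ∑ k, (A i k : ℝ) * y1 k) :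
    ∃ m, IsLeast {s : ℝ | ∃ y : Fin q → ℝ, (∀ k, 0 ≤ y k) ∧
        (∀ i, (b i : ℝ) ≤ ∑ k, (A i k : ℝ) * y k) ∧ s = ∑ k, y k} m := by
  set C : ℝ := ∑ k, y1 k with hC
  set S : Set (Fin q → ℝ) :=
    {y | ((∀ k, 0 ≤ y k) ∧ ∀ i, (b i : ℝ) ≤ ∑ k, (A i k : ℝ) * y k) ∧ ∑ k, y k ≤ C}
    with hS
  have hclosed : IsClosed S := by
    have : S = ((⋂ k, {y : Fin q → ℝ | 0 ≤ y k}) ∩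
        ⋂ i, {y : Fin q → ℝ | (b i : ℝ) ≤ ∑ k, (A i k : ℝ) * y k}) ∩
        {y : Fin q → ℝ | ∑ k, y k ≤ C} := by
      ext y; simp [hS, Set.mem_iInter, and_assoc]
    rw [this]
    refine IsClosed.inter (IsClosed.inter (isClosed_iInter fun k => ?_)
      (isClosed_iInter fun i => ?_)) ?_
    · exact isClosed_le continuous_const (continuous_apply k)
    · exact isClosed_le continuous_const (by continuity)
    · exact isClosed_le (continuous_finset_sum _ fun k _ => continuous_apply k)
        continuous_const
  have hsub : S ⊆ Set.pi Set.univ fun _ => Set.Icc (0:ℝ) C := by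
    intro y hy k _
    exact ⟨hy.1.1 k, (Finset.single_le_sum (fun k _ => hy.1.1 k) (Finset.mem_univ k)).trans
      hy.2⟩
  have hcpt : IsCompact S :=
    (isCompact_univ_pi fun _ => isCompact_Icc).of_isClosed_subset hclosed hsub
  have hSne : S.Nonempty := ⟨y1, ⟨h1, h2⟩, le_rfl⟩
  obtain ⟨x, hxS, hx⟩ := hcpt.exists_isMinOn hSne
    (continuous_finset_sum _ fun k _ => continuous_apply k).continuousOn
  refine ⟨∑ k, x k, ⟨x, hxS.1.1, hxS.1.2, rfl⟩, ?_⟩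
  rintro s ⟨y, hy1', hy2', rfl⟩
  by_cases hc : ∑ k, y k ≤ C
  · exact hx (Set.mem_setOf.2 ⟨⟨hy1', hy2'⟩, hc⟩)
  · have hxC : ∑ k, x k ≤ C := hx (Set.mem_setOf.2 ⟨⟨h1, h2⟩, le_rfl⟩)
    exact hxC.trans (le_of_lt (lt_of_not_ge hc))

section keys
variable {n q : ℕ} (A : Matrix (Fin n) (Fin q) ℕ)

lemma keyR (h01 : ∀ i j, A i j ≤ 1) (i : Fin n) (y : Fin q → ℝ) :
    ∑ k, ((1 - A i k : ℕ) : ℝ) * y k = ∑ k, y k - ∑ k, (A i k : ℝ) * y k := by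
  rw [← Finset.sum_sub_distrib]
  refine Finset.sum_congr rfl fun k _ => ?_
  have h := h01 i k
  have : ((1 - A i k : ℕ) : ℝ) = 1 - (A i k : ℝ) := by
    rw [Nat.cast_sub h]; norm_num
  rw [this]; ring

lemma keyZ (h01 : ∀ i j, A i j ≤ 1) (i : Fin n) (y : Fin q → ℕ) :
    ∑ k, ((1 - A i k : ℕ) : ℤ) * (y k : ℤ)
      = ∑ k, (y k : ℤ) - ∑ k, (A i k : ℤ) * (y k : ℤ) := by
  rw [← Finset.sum_sub_distrib]
  refine Finset.sum_congr rfl fun k _ => ?_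
  have h := h01 i k
  have : ((1 - A i k : ℕ) : ℤ) = 1 - (A i k : ℤ) := by
    rw [Nat.cast_sub h]; norm_num
  rw [this]; ring

end keys

/-- for the incidence matrix `A` of a clutter (`{0,1}`-columns, none ≤ another,
no zero column), the system `x ≥ 0, xA ≥ 1` has the integer rounding property iff the
system `x ≥ 0, xA* ≤ 1` does, where `A*` has columns `1 - vᵢ`. -/
theorem stmt4 (n q : ℕ) (A : Matrix (Fin n) (Fin q) ℕ)
    (h01 : ∀ i j, A i j ≤ 1)
    (hne : ∀ j, ∃ i, A i j ≠ 0)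
    (hclutter : ∀ j k : Fin q, (∀ i, A i j ≤ A i k) → j = k) :
    RoundingGe A ↔ RoundingLe (fun i j => 1 - A i j) := by
  rcases Nat.eq_zero_or_pos q with hq0 | hq
  · -- degenerate case q = 0 : both properties hold trivially
    subst hq0
    have hGe0 : RoundingGe A := by
      intro a m hm
      obtain ⟨⟨y, hy1, hy2, hy3⟩, -⟩ := hm
      simp only [Finset.univ_eq_empty, Finset.sum_empty] at hy2 hy3
      subst hy3
      constructor
      · exact ⟨fun _ => 0, fun i => by
          simpa using (by exact_mod_cast hy2 i : (0:ℤ) ≤ a i), by simp⟩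
      · rintro t ⟨y', -, ht⟩
        simp only [Finset.univ_eq_empty, Finset.sum_empty] at ht
        simp [ht]
    have hLe0 : RoundingLe (fun i j => 1 - A i j) := by
      intro a m hm
      obtain ⟨⟨y, hy1, hy2, hy3⟩, -⟩ := hm
      simp only [Finset.univ_eq_empty, Finset.sum_empty] at hy2 hy3
      subst hy3
      constructor
      · exact ⟨fun _ => 0, fun i => by
          simpa using (by exact_mod_cast hy2 i : a i ≤ (0:ℤ)), by simp⟩
      · rintro t ⟨y', -, ht⟩
        simp only [Finset.univ_eq_empty, Finset.sum_empty] at ht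
        simp [ht]
    exact iff_of_true hGe0 hLe0
  set k0 : Fin q := ⟨0, hq⟩ with hk0def
  constructor
  · -- RoundingGe A → RoundingLe A*
    intro hGe b m hm
    obtain ⟨⟨y0, hy0pos, hy0b, hy0sum⟩, hmlb⟩ := hm
    have hm0 : 0 ≤ m := hy0sum ▸ Finset.sum_nonneg fun k _ => hy0pos k
    have hs0 : (0:ℤ) ≤ ⌈m⌉ := Int.ceil_nonneg hm0
    have hms : m ≤ (⌈m⌉:ℝ) := Int.le_ceil m
    set y1 : Fin q → ℝ := fun k => y0 k + if k = k0 then ((⌈m⌉:ℝ) - m) else 0 with hy1def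
    have hy1pos : ∀ k, 0 ≤ y1 k := by
      intro k; have := hy0pos k; dsimp only [y1]; split <;> linarith
    have hy1sum : ∑ k, y1 k = (⌈m⌉:ℝ) := by
      simp only [y1, Finset.sum_add_distrib, Finset.sum_ite_eq' Finset.univ k0,
        Finset.mem_univ, if_true]
      rw [← hy0sum]; ring
    have hy1b : ∀ i, (b i : ℝ) ≤ ∑ k, ((1 - A i k : ℕ):ℝ) * y1 k := by
      intro i
      have h0 : (b i : ℝ) ≤ ∑ k, ((1 - A i k : ℕ):ℝ) * y0 k := hy0b i
      have hexp : ∑ k, ((1 - A i k:ℕ):ℝ) * y1 k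
          = ∑ k, ((1 - A i k:ℕ):ℝ) * y0 k + ((1 - A i k0:ℕ):ℝ) * ((⌈m⌉:ℝ) - m) := by
        simp only [y1, mul_add, Finset.sum_add_distrib, mul_ite, mul_zero,
          Finset.sum_ite_eq' Finset.univ k0, Finset.mem_univ, if_true]
      rw [hexp]
      have hnn : 0 ≤ ((1 - A i k0 : ℕ):ℝ) * ((⌈m⌉:ℝ) - m) :=
        mul_nonneg (by positivity) (by linarith)
      linarith
    set av : Fin n → ℤ := fun i => ⌈m⌉ - b i with hav
    have hy1a : ∀ i, ∑ k, (A i k:ℝ) * y1 k ≤ (av i:ℝ) := by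
      intro i
      have hk := keyR A h01 i y1
      have hcast : (av i : ℝ) = (⌈m⌉:ℝ) - (b i:ℝ) := by simp [hav]
      rw [hcast]
      have h2 := hy1b i
      rw [hk, hy1sum] at h2
      linarith
    obtain ⟨m', hm'⟩ := exists_isGreatest A hne av y1 hy1pos hy1a
    have hsm' : (⌈m⌉:ℝ) ≤ m' := hm'.2 ⟨y1, hy1pos, hy1a, hy1sum.symm⟩
    obtain ⟨⟨y2, hy2a, hy2sum⟩, -⟩ := hGe av m' hm'
    have hfl : ⌈m⌉ ≤ ⌊m'⌋ := Int.le_floor.mpr hsm'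
    have hy2sumN : ((∑ k, y2 k : ℕ) : ℤ) = ⌊m'⌋ := by
      push_cast; exact hy2sum.symm
    have hsle : ⌈m⌉.toNat ≤ ∑ k, y2 k := by omega
    obtain ⟨y3, hy3le, hy3sum⟩ :=
      reduce_nat (∑ k, y2 k - ⌈m⌉.toNat) y2 ⌈m⌉.toNat (by omega)
    have hy3sumZ : ∑ k, (y3 k : ℤ) = ⌈m⌉ := by
      have h1 : ((∑ k, y3 k : ℕ) : ℤ) = ((⌈m⌉.toNat : ℕ) : ℤ) := by exact_mod_cast hy3sum
      push_cast at h1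
      rw [Int.toNat_of_nonneg hs0] at h1
      exact h1
    have hy3a : ∀ i, ∑ k, (A i k : ℤ) * (y3 k : ℤ) ≤ av i := fun i =>
      le_trans (Finset.sum_le_sum fun k _ =>
        mul_le_mul_of_nonneg_left (by exact_mod_cast hy3le k) (by positivity)) (hy2a i)
    constructor
    · refine ⟨y3, fun i => ?_, hy3sumZ.symm⟩
      show b i ≤ ∑ k, ((1 - A i k : ℕ) : ℤ) * (y3 k : ℤ)
      have hk := keyZ A h01 i y3
      have h2 := hy3a i
      rw [hk, hy3sumZ]
      simp only [hav] at h2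
      omega
    · rintro t ⟨y, hyb, rfl⟩
      refine Int.ceil_le.mpr (hmlb ?_)
      refine ⟨fun k => (y k : ℝ), fun k => by positivity, fun i => ?_, by push_cast; ring⟩
      have := hyb i
      push_cast
      exact_mod_cast this
  · -- RoundingLe A* → RoundingGe A
    intro hLe a m hm
    obtain ⟨⟨y0, hy0pos, hy0a, hy0sum⟩, hub⟩ := hm
    have hm0 : 0 ≤ m := hy0sum ▸ Finset.sum_nonneg fun k _ => hy0pos k
    have hs0 : (0:ℤ) ≤ ⌊m⌋ := Int.floor_nonneg.2 hm0
    have hsm : (⌊m⌋:ℝ) ≤ m := Int.floor_le m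
    set c : ℝ := (⌊m⌋:ℝ) / m with hc
    have hc0 : 0 ≤ c := div_nonneg (by exact_mod_cast hs0) hm0
    have hc1 : c ≤ 1 := by
      rcases eq_or_lt_of_le hm0 with h | h
      · simp [hc, ← h]
      · rw [hc, div_le_one h]; exact hsm
    set y1 : Fin q → ℝ := fun k => c * y0 k with hy1def
    have hy1pos : ∀ k, 0 ≤ y1 k := fun k => mul_nonneg hc0 (hy0pos k)
    have hy1sum : ∑ k, y1 k = (⌊m⌋:ℝ) := by
      rcases eq_or_lt_of_le hm0 with h | h
      · have h0 : m = 0 := h.symm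
        have hfl0 : (⌊m⌋:ℝ) = 0 := by rw [h0]; simp
        have hsum0 : ∑ k, y0 k = 0 := by rw [← hy0sum, h0]
        simp only [y1, ← Finset.mul_sum, hsum0, mul_zero, hfl0]
      · simp only [y1, ← Finset.mul_sum, ← hy0sum, hc]
        field_simp
    have hAy0 : ∀ i, 0 ≤ ∑ k, (A i k : ℝ) * y0 k := fun i =>
      Finset.sum_nonneg fun k _ => mul_nonneg (by positivity) (hy0pos k)
    have hy1a : ∀ i, ∑ k, (A i k : ℝ) * y1 k ≤ (a i : ℝ) := by
      intro i
      have hexp : ∑ k, (A i k : ℝ) * y1 k = c * ∑ k, (A i k : ℝ) * y0 k := by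
        rw [Finset.mul_sum]
        exact Finset.sum_congr rfl fun k _ => by simp only [y1]; ring
      rw [hexp]
      nlinarith [hAy0 i, hy0a i]
    set bv : Fin n → ℤ := fun i => ⌊m⌋ - a i with hbv
    have hy1b : ∀ i, (bv i : ℝ) ≤ ∑ k, ((1 - A i k : ℕ) : ℝ) * y1 k := by
      intro i
      have hk := keyR A h01 i y1
      have hcast : (bv i : ℝ) = (⌊m⌋:ℝ) - (a i : ℝ) := by simp [hbv]
      rw [hcast, hk, hy1sum]
      linarith [hy1a i]
    obtain ⟨m2, hm2⟩ := exists_isLeast (fun i j => 1 - A i j) bv y1 hy1pos hy1b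
    have hm2s : m2 ≤ (⌊m⌋:ℝ) := hm2.2 ⟨y1, hy1pos, hy1b, hy1sum.symm⟩
    obtain ⟨⟨y2, hy2b, hy2sum⟩, -⟩ := hLe bv m2 hm2
    have hts : ⌈m2⌉ ≤ ⌊m⌋ := Int.ceil_le.mpr hm2s
    have ht0 : (0:ℤ) ≤ ⌈m2⌉ := hy2sum ▸ Finset.sum_nonneg fun k _ => by positivity
    set d : ℕ := (⌊m⌋ - ⌈m2⌉).toNat with hd
    set y3 : Fin q → ℕ := Function.update y2 k0 (y2 k0 + d) with hy3def
    have hy3ge : ∀ k, y2 k ≤ y3 k := by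
      intro k
      rcases eq_or_ne k k0 with rfl | hk
      · simp [y3]
      · simp [y3, Function.update_of_ne hk]
    have hy3sumN : ∑ k, y3 k = ∑ k, y2 k + d := by
      rw [hy3def, Finset.sum_update_of_mem (Finset.mem_univ k0),
        Finset.sdiff_singleton_eq_erase]
      have := Finset.add_sum_erase Finset.univ y2 (Finset.mem_univ k0)
      omega
    have hy2sumN : ((∑ k, y2 k : ℕ) : ℤ) = ⌈m2⌉ := by push_cast; exact hy2sum.symm
    have hy3sumZ : ∑ k, (y3 k : ℤ) = ⌊m⌋ := by
      have h1 : ((∑ k, y3 k : ℕ) : ℤ) = ((∑ k, y2 k : ℕ) : ℤ) + ((d : ℕ) : ℤ) := by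
        exact_mod_cast congrArg (Nat.cast : ℕ → ℤ) hy3sumN
      have h2 : ((d : ℕ) : ℤ) = ⌊m⌋ - ⌈m2⌉ := by
        rw [hd]; exact Int.toNat_of_nonneg (by omega)
      have h3 : ∑ k, (y3 k : ℤ) = ((∑ k, y3 k : ℕ) : ℤ) := by push_cast; ring
      rw [h3, h1, h2, hy2sumN]; ring
    refine ⟨⟨y3, fun i => ?_, hy3sumZ.symm⟩, ?_⟩
    · -- A y3 ≤ a
      have hk := keyZ A h01 i y3
      have h2 : bv i ≤ ∑ k, ((1 - A i k : ℕ) : ℤ) * (y3 k : ℤ) :=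
        le_trans (hy2b i) (Finset.sum_le_sum fun k _ =>
          mul_le_mul_of_nonneg_left (by exact_mod_cast hy3ge k) (by positivity))
      rw [hk, hy3sumZ] at h2
      simp only [hbv] at h2
      omega
    · rintro t ⟨y, hya, rfl⟩
      refine Int.le_floor.mpr (hub ?_)
      refine ⟨fun k => (y k : ℝ), fun k => by positivity, fun i => ?_, by push_cast; ring⟩
      have := hya i
      push_cast
      exact_mod_cast this
end

section
/- Let A be a nonnegative integer matrix with columns v_1,...,v_q and let B = {(v_1,1),...,(v_q,1),(0,1)} ⊆ ℤ^{n+1}. If B is a Hilbert basis, then the set A = {v_1,...,v_q} satisfies ℕA = ℤA ∩ ℝ₊A (i.e., the semigroup generated by the v_i is normal). -/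
/-!
If `a = ∑ tₖ vₖ` with `tₖ ≥ 0`, then for `N = ⌈∑ tₖ⌉` the integer point `(a, N)` lies in the
cone `ℝ₊B`: put the slack `N - ∑ tₖ ≥ 0` on the generator `(0, 1)`. As `B` is a Hilbert basis,
`(a, N)` is then an `ℕ`-combination of `B`, and its first `n` coordinates write `a` as an
`ℕ`-combination of the `vₖ`.
-/

/-- The family `B = {(v₁,1),…,(v_q,1),(0,1)} ⊆ ℤ^{n+1}`. -/
def liftFam {n q : ℕ} (v : Fin q → Fin n → ℕ) : Option (Fin q) → Fin (n+1) → ℤ :=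
  fun o => o.elim (Fin.snoc (0 : Fin n → ℤ) 1)
    (fun k => Fin.snoc (fun j => (v k j : ℤ)) 1)

theorem sum_smul_liftFam {R : Type*} [Ring R] {n q : ℕ} (v : Fin q → Fin n → ℕ)
    (c : Option (Fin q) → R) :
    ∑ o, c o • (fun j => (liftFam v o j : R)) =
      Fin.snoc (∑ k, c (some k) • fun j => (v k j : R)) (∑ o, c o) := by
  funext j
  refine Fin.lastCases ?_ (fun _ => ?_) j <;>
    simp [liftFam, Fintype.sum_option, Finset.sum_apply]

theorem snoc_mem_cone_liftFam {n q : ℕ} {v : Fin q → Fin n → ℕ} {a : Fin n → ℤ}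
    {t : Fin q → ℝ} (ht0 : ∀ k, 0 ≤ t k)
    (ht : (fun j => (a j : ℝ)) = ∑ k, t k • fun j => (v k j : ℝ))
    {N : ℕ} (hN : ∑ k, t k ≤ N) :
    ∃ s : Option (Fin q) → ℝ, (∀ o, 0 ≤ s o) ∧
      (fun j => ((Fin.snoc a (N : ℤ) : Fin (n + 1) → ℤ) j : ℝ)) =
        ∑ o, s o • fun j => (liftFam v o j : ℝ) := by
  refine ⟨fun o => o.elim (N - ∑ k, t k) t, fun o => ?_, ?_⟩
  · cases o with
    | none => exact sub_nonneg.mpr hN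
    | some k => exact ht0 k
  · rw [sum_smul_liftFam, Fintype.sum_option]
    simp only [Option.elim_none, Option.elim_some, sub_add_cancel, ← ht]
    exact (Fin.comp_snoc (fun x : ℤ => (x : ℝ)) a N).trans (by simp [Function.comp_def])

theorem eq_sum_of_snoc_eq_sum_liftFam {n q : ℕ} {v : Fin q → Fin n → ℕ} {a : Fin n → ℤ}
    {m : ℤ} {c : Option (Fin q) → ℕ} (hc : Fin.snoc a m = ∑ o, c o • liftFam v o) :
    a = ∑ k, c (some k) • fun j => (v k j : ℤ) := by
  have h := sum_smul_liftFam v (fun o => (c o : ℤ))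
  simp only [natCast_zsmul, Int.cast_id] at h
  simpa using congrArg Fin.init (hc.trans h)

theorem exists_nonneg_real_combination_of_nat {ι : Type*} [Fintype ι] {n : ℕ}
    {v : ι → Fin n → ℕ} {a : Fin n → ℤ} {c : ι → ℕ}
    (hc : a = ∑ k, c k • fun j => (v k j : ℤ)) :
    ∃ t : ι → ℝ, (∀ k, 0 ≤ t k) ∧ (fun j => (a j : ℝ)) = ∑ k, t k • fun j => (v k j : ℝ) :=
  ⟨fun k => c k, fun k => by positivity, by subst hc; funext j; simp [Finset.sum_apply]⟩

/-- if `B = {(v₁,1),…,(v_q,1),(0,1)}` is a Hilbert basis then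
`ℕA = ℤA ∩ ℝ₊A` for `A = {v₁,…,v_q}`. -/
theorem stmt5 (n q : ℕ) (v : Fin q → Fin n → ℕ)
    (hB : IsHilbertBasisFam (liftFam v)) :
    ∀ a : Fin n → ℤ,
      (∃ c : Fin q → ℕ, a = ∑ k, c k • fun j => (v k j : ℤ)) ↔
        ((∃ c : Fin q → ℤ, a = ∑ k, c k • fun j => (v k j : ℤ)) ∧
          (∃ t : Fin q → ℝ, (∀ k, 0 ≤ t k) ∧
            (fun j => (a j : ℝ)) = ∑ k, t k • fun j => (v k j : ℝ))) := by
  intro a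
  constructor
  · rintro ⟨c, hc⟩
    exact ⟨⟨fun k => c k, by simpa using hc⟩, exists_nonneg_real_combination_of_nat hc⟩
  · rintro ⟨-, t, ht0, ht⟩
    obtain ⟨s, hs0, hs⟩ := snoc_mem_cone_liftFam ht0 ht (Nat.le_ceil _)
    obtain ⟨c, hc⟩ := (hB _).mpr ⟨s, hs0, hs⟩
    exact ⟨_, eq_sum_of_snoc_eq_sum_liftFam hc⟩
end

section
/- Let A be a nonnegative integer matrix with columns v_1,...,v_q and let B = {(v_1,1),...,(v_q,1),(0,1)} ⊆ ℤ^{n+1}. If B is a Hilbert basis, then the quotient group ℤ^n / ℤA is torsion-free, where A = {v_1,...,v_q}. -/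
theorem stmt6_pos (n q : ℕ) (v : Fin q → Fin n → ℕ)
    (hB : IsHilbertBasisFam (liftFam v)) :
    ∀ (a : Fin n → ℤ) (s : ℤ), 0 < s →
      (∃ c : Fin q → ℤ, s • a = ∑ k, c k • fun j => (v k j : ℤ)) →
      ∃ c : Fin q → ℤ, a = ∑ k, c k • fun j => (v k j : ℤ) := by
  intro a s hs ⟨c, hc⟩
  have hs1 : (1:ℤ) ≤ s := hs
  -- coordinatewise form of hc
  have hci : ∀ i : Fin n, s * a i = ∑ k, c k * (v k i : ℤ) := by
    intro i
    have := congrFun hc i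
    simpa [Finset.sum_apply] using this
  set N : ℕ := ∑ k, (c k).natAbs with hN
  have hNk : ∀ k, 0 ≤ c k + (N:ℤ) * s := by
    intro k
    have h1 : ((c k).natAbs : ℤ) ≤ (N:ℤ) := by
      exact_mod_cast Finset.single_le_sum
        (f := fun k => (c k).natAbs) (fun _ _ => Nat.zero_le _) (Finset.mem_univ k)
    have h2 : (N:ℤ) ≤ (N:ℤ) * s := le_mul_of_one_le_right (by positivity) hs1
    have h3 : -(c k) ≤ ((c k).natAbs : ℤ) := by omega
    linarith
  set M : ℕ := ∑ k, (c k + (N:ℤ) * s).toNat with hM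
  have hMeq : (M:ℤ) = ∑ k, (c k + (N:ℤ) * s) := by
    rw [hM]
    push_cast
    exact Finset.sum_congr rfl fun k _ => Int.toNat_of_nonneg (hNk k)
  have hsR : (s:ℝ) ≠ 0 := Int.cast_ne_zero.mpr hs.ne'
  have hsR' : (0:ℝ) < (s:ℝ) := by exact_mod_cast hs
  -- the real coefficients
  set t : Option (Fin q) → ℝ :=
    fun o => o.elim ((M : ℝ) - ∑ k, ((c k : ℝ) + (N:ℝ) * s) / s)
      (fun k => ((c k : ℝ) + (N:ℝ) * s) / s) with ht
  have htk : ∀ k, 0 ≤ ((c k : ℝ) + (N:ℝ) * s) / s := by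
    intro k
    apply div_nonneg _ hsR'.le
    exact_mod_cast hNk k
  have htnonneg : ∀ i, 0 ≤ t i := by
    intro i
    cases i with
    | none =>
      simp only [ht, Option.elim, sub_nonneg]
      have hle : ∀ k ∈ Finset.univ, ((c k : ℝ) + (N:ℝ) * s) / s ≤ ((c k : ℝ) + (N:ℝ) * s) := by
        intro k _
        apply div_le_self
        · exact_mod_cast hNk k
        · exact_mod_cast hs1
      calc ∑ k, ((c k : ℝ) + (N:ℝ) * s) / s ≤ ∑ k, ((c k : ℝ) + (N:ℝ) * s) :=
            Finset.sum_le_sum hle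
        _ = (M:ℝ) := by exact_mod_cast hMeq.symm
    | some k => exact htk k
  set z : Fin (n+1) → ℤ := Fin.snoc (fun j => a j + (N:ℤ) * ∑ k, (v k j : ℤ)) (M:ℤ) with hz
  have key : ∀ i : Fin n,
      ((a i : ℝ) + (N:ℝ) * ∑ k, (v k i : ℝ)) = ∑ k, (((c k : ℝ) + (N:ℝ) * s) / s) * (v k i : ℝ) := by
    intro i
    have hciR : (s:ℝ) * (a i : ℝ) = ∑ k, (c k : ℝ) * (v k i : ℝ) := by
      have := hci i
      exact_mod_cast congrArg (fun x : ℤ => (x:ℝ)) this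
    rw [eq_comm]
    rw [Finset.sum_congr rfl (fun k _ => div_mul_eq_mul_div _ _ _), ← Finset.sum_div,
      div_eq_iff hsR]
    simp only [add_mul, Finset.sum_add_distrib]
    rw [← hciR, ← Finset.mul_sum]
    ring
  have heq : (fun j => (z j : ℝ)) = ∑ i, t i • fun j => ((liftFam v i j : ℝ)) := by
    funext j
    rw [Finset.sum_apply]
    rw [Fintype.sum_option]
    refine Fin.lastCases ?_ ?_ j
    · simp only [hz, Fin.snoc_last, liftFam, Option.elim, smul_eq_mul, Pi.smul_apply]
      simp only [Fin.snoc_last, ht, Option.elim, Int.cast_one, mul_one, Int.cast_natCast,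
        sub_add_cancel]
    · intro i
      simp only [hz, Fin.snoc_castSucc, liftFam, Option.elim, smul_eq_mul, Pi.smul_apply]
      simp only [Fin.snoc_castSucc, ht, Option.elim, Pi.zero_apply]
      push_cast
      rw [key i]
      simp [mul_comm]
  obtain ⟨d, hd⟩ := (hB z).mpr ⟨t, htnonneg, heq⟩
  refine ⟨fun k => (d (some k) : ℤ) - (N:ℤ), ?_⟩
  funext j
  have hdj := congrFun hd (Fin.castSucc j)
  simp only [hz, Fin.snoc_castSucc, Finset.sum_apply, Pi.smul_apply, smul_eq_mul] at hdj
  rw [Fintype.sum_option] at hdj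
  simp only [liftFam, Option.elim, Fin.snoc_castSucc, Pi.zero_apply, smul_eq_mul,
    nsmul_eq_mul, mul_zero, zero_add] at hdj
  have hdj' : a j + (N:ℤ) * ∑ k, (v k j : ℤ) = ∑ k, (d (some k) : ℤ) * (v k j : ℤ) := by
    simpa using hdj
  rw [Finset.sum_apply]
  simp only [Pi.smul_apply, smul_eq_mul, sub_mul, Finset.sum_sub_distrib, ← hdj',
    ← Finset.mul_sum]
  ring

/-- if `B = {(v₁,1),…,(v_q,1),(0,1)}` is a Hilbert basis then the group
`ℤⁿ/ℤA` is torsion-free, where `A = {v₁,…,v_q}`: whenever a nonzero multiple of `a`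
lies in `ℤA`, so does `a` itself. -/
theorem stmt6 (n q : ℕ) (v : Fin q → Fin n → ℕ)
    (hB : IsHilbertBasisFam (liftFam v)) :
    ∀ (a : Fin n → ℤ) (s : ℤ), s ≠ 0 →
      (∃ c : Fin q → ℤ, s • a = ∑ k, c k • fun j => (v k j : ℤ)) →
      ∃ c : Fin q → ℤ, a = ∑ k, c k • fun j => (v k j : ℤ) := by
  intro a s hs ⟨c, hc⟩
  rcases lt_or_gt_of_ne hs with h | h
  · refine stmt6_pos n q v hB a (-s) (by omega) ⟨-c, ?_⟩
    have := congrArg Neg.neg hc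
    simp only [← neg_smul] at this ⊢
    rw [this]
    rw [← Finset.sum_neg_distrib]
    exact Finset.sum_congr rfl fun k _ => by simp [neg_smul]
  · exact stmt6_pos n q v hB a s h ⟨c, hc⟩
end

section
/- Let v_1,...,v_q ∈ ℕ^n with |v_i| = d for all i (all columns have the same coordinate sum d), set A = {v_1,...,v_q} and B = {(v_1,1),...,(v_q,1),(0,1)}. If ℕA = ℤA ∩ ℝ₊A and ℤ^n/ℤA is torsion-free, then B is a Hilbert basis, i.e., ℕB = ℝ₊B ∩ ℤ^{n+1}. -/
/-- If a rational vector is a real linear combination of rational vectors,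
it is a rational linear combination of them. -/
lemma rat_comb_of_real_comb {n q : ℕ} (v : Fin q → Fin n → ℚ) (a : Fin n → ℚ)
    (t : Fin q → ℝ) (h : ∀ j, (a j : ℝ) = ∑ k, t k * (v k j : ℝ)) :
    ∃ c : Fin q → ℚ, a = ∑ k, c k • v k := by
  by_contra hc
  have hmem : a ∉ Submodule.span ℚ (Set.range v) := by
    intro hmem
    obtain ⟨c, hc'⟩ := (Submodule.mem_span_range_iff_exists_fun ℚ).mp hmem
    exact hc ⟨c, hc'.symm⟩
  obtain ⟨f, hfa, hfbot⟩ := Submodule.exists_dual_map_eq_bot_of_notMem hmem inferInstance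
  have hfv : ∀ k, f (v k) = 0 := by
    intro k
    have : f (v k) ∈ (Submodule.span ℚ (Set.range v)).map f :=
      Submodule.mem_map_of_mem (Submodule.subset_span ⟨k, rfl⟩)
    rwa [hfbot, Submodule.mem_bot] at this
  set w : Fin n → ℚ := fun j => f (fun i => if j = i then 1 else 0) with hw
  have happly : ∀ x : Fin n → ℚ, f x = ∑ j, x j * w j := by
    intro x
    rw [LinearMap.pi_apply_eq_sum_univ f x]
    simp [hw, smul_eq_mul]
  have hfv' : ∀ k, ∑ j, (v k j : ℝ) * (w j : ℝ) = 0 := by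
    intro k
    have := hfv k
    rw [happly] at this
    have := congrArg (fun x : ℚ => (x : ℝ)) this
    push_cast at this
    simpa using this
  have : (f a : ℝ) = 0 := by
    rw [happly]
    push_cast
    calc ∑ j, (a j : ℝ) * (w j : ℝ)
        = ∑ j, (∑ k, t k * (v k j : ℝ)) * (w j : ℝ) := by
          refine Finset.sum_congr rfl fun j _ => by rw [h j]
      _ = ∑ k, t k * ∑ j, (v k j : ℝ) * (w j : ℝ) := by
          simp only [Finset.sum_mul, Finset.mul_sum]
          rw [Finset.sum_comm]
          refine Finset.sum_congr rfl fun k _ => Finset.sum_congr rfl fun j _ => by ring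
      _ = 0 := by simp [hfv']
  exact hfa (by exact_mod_cast this)

lemma clear_denoms {q : ℕ} (c : Fin q → ℚ) :
    ∃ (s : ℤ) (e : Fin q → ℤ), s ≠ 0 ∧ ∀ k, (e k : ℚ) = (s : ℚ) * c k := by
  refine ⟨∏ k, ((c k).den : ℤ), fun k => (c k).num * ∏ j ∈ Finset.univ.erase k, ((c j).den : ℤ),
    ?_, ?_⟩
  · exact Finset.prod_ne_zero_iff.mpr fun k _ => Int.natCast_ne_zero.mpr (c k).den_nz
  · intro k
    push_cast
    have hd : ((c k).den : ℚ) ≠ 0 := by exact_mod_cast (c k).den_nz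
    have h1 : ((c k).num : ℚ) = c k * ((c k).den : ℚ) := by
      have := (div_eq_iff hd).mp (Rat.num_div_den (c k))
      linarith
    rw [h1]
    rw [← Finset.mul_prod_erase Finset.univ (fun j => ((c j).den : ℚ)) (Finset.mem_univ k)]
    ring

lemma assemble {n q : ℕ} (v : Fin q → Fin n → ℕ) (z : Fin (n+1) → ℤ) (c : Fin q → ℕ) (m : ℕ)
    (hcs : ∀ j : Fin n, z j.castSucc = ∑ k, (c k : ℤ) * (v k j : ℤ))
    (hlast : z (Fin.last n) = (m : ℤ) + ∑ k, (c k : ℤ)) :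
    ∃ C : Option (Fin q) → ℕ, z = ∑ i, C i • liftFam v i := by
  refine ⟨fun o => o.elim m c, ?_⟩
  funext j
  rw [Finset.sum_apply, Fintype.sum_option]
  induction j using Fin.lastCases with
  | last =>
      simp only [liftFam, Option.elim, Pi.smul_apply, Fin.snoc_last, smul_eq_mul, nsmul_eq_mul,
        mul_one]
      push_cast
      linarith [hlast]
  | cast j =>
      simp only [liftFam, Option.elim, Pi.smul_apply, Fin.snoc_castSucc, Pi.zero_apply,
        smul_zero, nsmul_eq_mul, zero_add]
      rw [hcs j]

/-- if all columns have the same coordinate sum `d`, `ℕA = ℤA ∩ ℝ₊A`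
(normality of the semigroup) and `ℤⁿ/ℤA` is torsion-free, then
`B = {(v₁,1),…,(v_q,1),(0,1)}` is a Hilbert basis. -/
theorem stmt7 (n q d : ℕ) (v : Fin q → Fin n → ℕ)
    (hsum : ∀ k, ∑ j, v k j = d)
    (hnorm : ∀ a : Fin n → ℤ,
      (∃ c : Fin q → ℕ, a = ∑ k, c k • fun j => (v k j : ℤ)) ↔
        ((∃ c : Fin q → ℤ, a = ∑ k, c k • fun j => (v k j : ℤ)) ∧
          (∃ t : Fin q → ℝ, (∀ k, 0 ≤ t k) ∧
            (fun j => (a j : ℝ)) = ∑ k, t k • fun j => (v k j : ℝ))))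
    (htf : ∀ (a : Fin n → ℤ) (s : ℤ), s ≠ 0 →
      (∃ c : Fin q → ℤ, s • a = ∑ k, c k • fun j => (v k j : ℤ)) →
      ∃ c : Fin q → ℤ, a = ∑ k, c k • fun j => (v k j : ℤ)) :
    IsHilbertBasisFam (liftFam v) := by
  intro z
  constructor
  · rintro ⟨c, rfl⟩
    refine ⟨fun i => (c i : ℝ), fun i => Nat.cast_nonneg _, ?_⟩
    funext j
    simp only [Finset.sum_apply, Pi.smul_apply]
    push_cast [nsmul_eq_mul]
    simp [smul_eq_mul]
  · rintro ⟨t, ht, hz⟩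
    have hz' : ∀ j, (z j : ℝ) = ∑ i, t i * (liftFam v i j : ℝ) := by
      intro j
      have := congrFun hz j
      simpa [Finset.sum_apply, smul_eq_mul] using this
    set a : Fin n → ℤ := fun j => z j.castSucc with ha
    have hcoord : ∀ j : Fin n, (a j : ℝ) = ∑ k, t (some k) * (v k j : ℝ) := by
      intro j
      have := hz' j.castSucc
      rw [Fintype.sum_option] at this
      simpa [liftFam, Fin.snoc_castSucc] using this
    have hlastR : (z (Fin.last n) : ℝ) = t none + ∑ k, t (some k) := by
      have := hz' (Fin.last n)
      rw [Fintype.sum_option] at this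
      simpa [liftFam, Fin.snoc_last] using this
    have htsum : (0:ℝ) ≤ ∑ k, t (some k) :=
      Finset.sum_nonneg fun k _ => ht (some k)
    rcases Nat.eq_zero_or_pos d with hd | hd
    · -- degenerate case: all v k = 0
      have hv0 : ∀ k j, v k j = 0 := by
        intro k j
        have := hsum k
        rw [hd] at this
        exact Finset.sum_eq_zero_iff.mp this j (Finset.mem_univ j)
      have hz0 : ∀ j : Fin n, z j.castSucc = 0 := by
        intro j
        have := hcoord j
        simp [hv0] at this
        exact_mod_cast this
      have hzl : 0 ≤ z (Fin.last n) := by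
        have : (0:ℝ) ≤ (z (Fin.last n) : ℝ) := by
          rw [hlastR]; exact add_nonneg (ht none) htsum
        exact_mod_cast this
      refine assemble v z 0 (z (Fin.last n)).toNat ?_ ?_
      · intro j; simp [hz0 j]
      · simp [Int.toNat_of_nonneg hzl]
    · -- main case: d > 0
      obtain ⟨cq, hcq⟩ := rat_comb_of_real_comb (fun k j => (v k j : ℚ))
        (fun j => (a j : ℚ)) (fun k => t (some k)) (by
          intro j
          push_cast
          exact hcoord j)
      have hcq' : ∀ j, (a j : ℚ) = ∑ k, cq k * (v k j : ℚ) := by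
        intro j
        have := congrFun hcq j
        simpa [Finset.sum_apply, smul_eq_mul] using this
      obtain ⟨s, e, hs, hse⟩ := clear_denoms cq
      have hsa : ∃ c : Fin q → ℤ, s • a = ∑ k, c k • fun j => (v k j : ℤ) := by
        refine ⟨e, ?_⟩
        funext j
        have : ((s * a j : ℤ) : ℚ) = ((∑ k, e k * (v k j : ℤ) : ℤ) : ℚ) := by
          push_cast
          rw [hcq', Finset.mul_sum]
          exact Finset.sum_congr rfl fun k _ => by rw [hse k]; ring
        have h2 := Int.cast_injective (α := ℚ) this
        simpa [Finset.sum_apply, smul_eq_mul] using h2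
      obtain ⟨ci, hci⟩ := htf a s hs hsa
      obtain ⟨cN, hcN⟩ := (hnorm a).mpr ⟨⟨ci, hci⟩, ⟨fun k => t (some k),
        fun k => ht (some k), by
          funext j
          rw [hcoord j]
          simp [Finset.sum_apply, smul_eq_mul]⟩⟩
      have hcs : ∀ j, a j = ∑ k, (cN k : ℤ) * (v k j : ℤ) := by
        intro j
        have := congrFun hcN j
        simpa [Finset.sum_apply, smul_eq_mul] using this
      -- compare coordinate sums
      have hsum1 : ∑ j, (a j : ℝ) = (∑ k, (cN k : ℝ)) * d := by
        rw [Finset.sum_mul]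
        calc ∑ j, (a j : ℝ) = ∑ j, ∑ k, (cN k : ℝ) * (v k j : ℝ) := by
              refine Finset.sum_congr rfl fun j _ => ?_
              have := hcs j
              push_cast [this]
              rfl
          _ = ∑ k, ∑ j, (cN k : ℝ) * (v k j : ℝ) := Finset.sum_comm
          _ = ∑ k, (cN k : ℝ) * d := by
              refine Finset.sum_congr rfl fun k _ => ?_
              rw [← Finset.mul_sum]
              congr 1
              rw [← hsum k]
              push_cast
              rfl
      have hsum2 : ∑ j, (a j : ℝ) = (∑ k, t (some k)) * d := by
        rw [Finset.sum_mul]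
        calc ∑ j, (a j : ℝ) = ∑ j, ∑ k, t (some k) * (v k j : ℝ) := by
              exact Finset.sum_congr rfl fun j _ => hcoord j
          _ = ∑ k, ∑ j, t (some k) * (v k j : ℝ) := Finset.sum_comm
          _ = ∑ k, t (some k) * d := by
              refine Finset.sum_congr rfl fun k _ => ?_
              rw [← Finset.mul_sum]
              congr 1
              rw [← hsum k]
              push_cast
              rfl
      have hdR : (0:ℝ) < d := by exact_mod_cast hd
      have hSeq : (∑ k, (cN k : ℝ)) = ∑ k, t (some k) := by
        have := hsum1.symm.trans hsum2
        exact mul_right_cancel₀ (ne_of_gt hdR) this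
      have hle : (∑ k, (cN k : ℤ)) ≤ z (Fin.last n) := by
        have hR : ((∑ k, (cN k : ℤ) : ℤ) : ℝ) ≤ (z (Fin.last n) : ℝ) := by
          push_cast
          rw [hlastR, ← hSeq]
          have := ht none
          push_cast
          linarith
        exact_mod_cast hR
      refine assemble v z cN (z (Fin.last n) - ∑ k, (cN k : ℤ)).toNat ?_ ?_
      · intro j; exact hcs j
      · rw [Int.toNat_of_nonneg (sub_nonneg.mpr hle)]; ring
end

section
/- Let G be a connected non-bipartite graph with vertex set {1,...,n} and let A = {v_1,...,v_q} ⊆ ℤ^n be the set of characteristic vectors of the edges of G. Then the quotient group ℤ^n/ℤA is isomorphic to ℤ/2ℤ. -/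
/-- The set of characteristic vectors `e_i + e_j` of the edges of a graph `G`. -/
def edgeVectors {n : ℕ} (G : SimpleGraph (Fin n)) : Set (Fin n → ℤ) :=
  {x | ∃ i j, G.Adj i j ∧
    x = fun k => (if k = i then 1 else 0) + (if k = j then 1 else 0)}

lemma edge_mem {n : ℕ} {G : SimpleGraph (Fin n)} {i j : Fin n} (h : G.Adj i j) :
    (Pi.single i 1 + Pi.single j 1 : Fin n → ℤ) ∈ Submodule.span ℤ (edgeVectors G) := by
  apply Submodule.subset_span
  refine ⟨i, j, h, ?_⟩
  funext k
  simp [Pi.single_apply]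

lemma walk_mem {n : ℕ} {G : SimpleGraph (Fin n)} {i j : Fin n} (p : G.Walk i j) :
    (Pi.single i 1 : Fin n → ℤ) - (-1 : ℤ)^p.length • Pi.single j 1 ∈
      Submodule.span ℤ (edgeVectors G) := by
  induction p with
  | nil => simp
  | @cons a b c h q ih =>
    have he := edge_mem h
    have key : (Pi.single a 1 : Fin n → ℤ) - (-1 : ℤ)^(SimpleGraph.Walk.cons h q).length • Pi.single c 1 =
        (Pi.single a 1 + Pi.single b 1) - ((Pi.single b 1 : Fin n → ℤ) - (-1 : ℤ)^q.length • Pi.single c 1) := by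
      rw [SimpleGraph.Walk.length_cons, pow_succ]
      module
    rw [key]
    exact sub_mem he ih

lemma odd_walk_exists {n : ℕ} {G : SimpleGraph (Fin n)} (hconn : G.Connected)
    (hnotbip : ¬ G.Colorable 2) : ∃ (v : Fin n) (p : G.Walk v v), Odd p.length := by
  by_contra hc
  push_neg at hc
  obtain ⟨r⟩ := hconn.nonempty
  have c : G.Coloring (ZMod 2) := SimpleGraph.Coloring.mk
    (fun v => (((hconn.preconnected r v).some.length : ℕ) : ZMod 2))
    (by
      intro u v huv h
      set pu := (hconn.preconnected r u).some
      set pv := (hconn.preconnected r v).some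
      have hlen : ((pu.append ((SimpleGraph.Walk.cons huv pv.reverse).copy rfl rfl)).length : ℕ)
          = pu.length + pv.length + 1 := by
        simp [SimpleGraph.Walk.length_append, SimpleGraph.Walk.length_cons,
          SimpleGraph.Walk.length_reverse]
        omega
      have hodd : Odd (pu.append ((SimpleGraph.Walk.cons huv pv.reverse).copy rfl rfl)).length := by
        rw [hlen, Nat.odd_iff, Nat.add_mod, Nat.add_mod pu.length]
        have : pu.length % 2 = pv.length % 2 := by
          have := (ZMod.natCast_eq_natCast_iff' pu.length pv.length 2).mp h
          simpa using this
        omega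
      exact hc _ _ hodd)
  have := c.colorable
  rw [ZMod.card 2] at this
  exact hnotbip this

/-- for a connected non-bipartite graph `G` on `{1,…,n}`, the quotient of
`ℤⁿ` by the subgroup generated by the edge vectors is isomorphic to `ℤ/2ℤ`. -/
theorem stmt8 (n : ℕ) (G : SimpleGraph (Fin n)) (hconn : G.Connected)
    (hnotbip : ¬ G.Colorable 2) :
    Nonempty (((Fin n → ℤ) ⧸ Submodule.span ℤ (edgeVectors G)) ≃+ ZMod 2) := by
  set sp := Submodule.span ℤ (edgeVectors G) with hsp
  obtain ⟨v, p, hp⟩ := odd_walk_exists hconn hnotbip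
  -- 2 e_v ∈ sp
  have h2v : ((2 : ℤ) • Pi.single v 1 : Fin n → ℤ) ∈ sp := by
    have := walk_mem p
    rw [hp.neg_one_pow] at this
    have h : ((2 : ℤ) • Pi.single v 1 : Fin n → ℤ)
        = Pi.single v 1 - (-1 : ℤ) • Pi.single v 1 := by module
    rw [h]; exact this
  -- e_i - e_v ∈ sp for all i
  have hsub : ∀ i : Fin n, ((Pi.single i 1 - Pi.single v 1 : Fin n → ℤ)) ∈ sp := by
    intro i
    have hw := walk_mem (hconn.preconnected i v).some
    rcases Nat.even_or_odd (hconn.preconnected i v).some.length with he | ho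
    · rwa [he.neg_one_pow, one_smul] at hw
    · rw [ho.neg_one_pow] at hw
      have h : ((Pi.single i 1 - Pi.single v 1 : Fin n → ℤ))
          = (Pi.single i 1 - (-1 : ℤ) • Pi.single v 1) - (2 : ℤ) • Pi.single v 1 := by module
      rw [h]; exact sub_mem hw h2v
  -- the linear map
  let φ : (Fin n → ℤ) →ₗ[ℤ] ZMod 2 :=
    { toFun := fun x => ((∑ i, x i : ℤ) : ZMod 2)
      map_add' := by intro x y; simp [Finset.sum_add_distrib]
      map_smul' := by
        intro c x
        simp only [Pi.smul_apply, smul_eq_mul, ← Finset.mul_sum, RingHom.id_apply]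
        push_cast
        rw [zsmul_eq_mul] }
  have hker : sp = LinearMap.ker φ := by
    apply le_antisymm
    · rw [hsp, Submodule.span_le]
      rintro x ⟨i, j, hadj, rfl⟩
      simp only [SetLike.mem_coe, LinearMap.mem_ker]
      have : (∑ k, ((if k = i then (1:ℤ) else 0) + (if k = j then 1 else 0))) = 2 := by
        rw [Finset.sum_add_distrib]
        simp
      show ((∑ k, ((if k = i then (1:ℤ) else 0) + (if k = j then 1 else 0)) : ℤ) : ZMod 2) = 0
      rw [this]; decide
    · intro x hx
      have hx' : ((∑ i, x i : ℤ) : ZMod 2) = 0 := hx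
      rw [ZMod.intCast_zmod_eq_zero_iff_dvd] at hx'
      obtain ⟨m, hm⟩ := hx'
      have key : x = (∑ i, x i • ((Pi.single i 1 : Fin n → ℤ) - Pi.single v 1))
          + (∑ i, x i) • Pi.single v 1 := by
        have h1 : ∑ i, x i • ((Pi.single i 1 : Fin n → ℤ) - Pi.single v 1)
            = (∑ i, x i • (Pi.single i 1 : Fin n → ℤ)) - (∑ i, x i) • Pi.single v 1 := by
          simp [smul_sub, Finset.sum_sub_distrib, Finset.sum_smul]
        have h2 : (∑ i, x i • (Pi.single i 1 : Fin n → ℤ)) = x := by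
          funext k
          simp [Finset.sum_apply, Pi.single_apply]
        rw [h1, h2]; abel
      rw [key]
      refine add_mem (Submodule.sum_mem _ fun i _ => Submodule.smul_mem _ _ (hsub i)) ?_
      have : (∑ i, x i) • (Pi.single v 1 : Fin n → ℤ) = m • ((2:ℤ) • Pi.single v 1) := by
        rw [smul_smul, mul_comm]
        norm_num at hm
        rw [← hm]
      rw [this]
      exact Submodule.smul_mem _ _ h2v
  have hsurj : Function.Surjective φ := by
    intro a
    obtain ⟨z, hz⟩ := ZMod.intCast_surjective (n := 2) a
    refine ⟨Pi.single v z, ?_⟩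
    have hφ : φ (Pi.single v z) = (((∑ i : Fin n, (Pi.single v z : Fin n → ℤ) i) : ℤ) : ZMod 2) := rfl
    rw [hφ, show ((∑ i : Fin n, (Pi.single v z : Fin n → ℤ) i) : ℤ) = z from by simp [Pi.single_apply]]
    exact hz
  exact ⟨((Submodule.quotEquivOfEq sp (LinearMap.ker φ) hker).trans
    (φ.quotKerEquivOfSurjective hsurj)).toAddEquiv⟩
end

section
/- Let G be a connected bipartite graph with vertex set {1,...,n} and let A = {v_1,...,v_q} ⊆ ℤ^n be the set of characteristic vectors of the edges of G. Then ℤ^n/ℤA is isomorphic to ℤ, i.e., the subgroup ℤA has rank n-1 and the quotient is torsion-free. -/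
/-- for a connected bipartite graph `G` on `{1,…,n}`, the quotient of
`ℤⁿ` by the subgroup generated by the edge vectors is isomorphic to `ℤ`. -/
theorem stmt9 (n : ℕ) (G : SimpleGraph (Fin n)) (hconn : G.Connected)
    (hbip : G.Colorable 2) :
    Nonempty (((Fin n → ℤ) ⧸ Submodule.span ℤ (edgeVectors G)) ≃+ ℤ) := by
  classical
  obtain ⟨c⟩ := hbip
  set S : Submodule ℤ (Fin n → ℤ) := Submodule.span ℤ (edgeVectors G) with hS
  set ε : Fin n → ℤ := fun i => if c i = 0 then 1 else -1 with hε
  have hε1 : ∀ i, ε i * ε i = 1 := by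
    intro i; simp only [hε]; split <;> norm_num
  have hεadj : ∀ {i j}, G.Adj i j → ε i = -ε j := by
    intro i j h
    have hne : c i ≠ c j := c.valid h
    have key : ∀ a b : Fin 2, a ≠ b →
        (if a = 0 then (1:ℤ) else -1) = -(if b = 0 then 1 else -1) := by decide
    exact key _ _ hne
  set E : Fin n → (Fin n → ℤ) := fun i k => if k = i then 1 else 0 with hE
  -- edge vectors are in S
  have hedge : ∀ {i j}, G.Adj i j → E i + E j ∈ S := by
    intro i j h
    exact Submodule.subset_span ⟨i, j, h, by funext k; simp [hE, Pi.add_apply]⟩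
  -- walk lemma
  have hwalk : ∀ (i j : Fin n) (w : G.Walk i j), E i - (ε i * ε j) • E j ∈ S := by
    intro i j w
    induction w with
    | nil => rw [hε1]; simp
    | @cons i a j h p ih =>
      have he := hedge h
      have := S.sub_mem he ih
      convert this using 1
      rw [hεadj h]
      module
  -- the linear functional
  set φ : (Fin n → ℤ) →ₗ[ℤ] ℤ := ∑ i, ε i • (LinearMap.proj i) with hφ
  have hφval : ∀ x, φ x = ∑ i, ε i * x i := by
    intro x
    simp [hφ, LinearMap.sum_apply, LinearMap.smul_apply, smul_eq_mul]
  have hφE : ∀ i, φ (E i) = ε i := by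
    intro i
    rw [hφval]
    simp [hE, mul_ite, Finset.sum_ite_eq', Finset.sum_ite_eq]
  obtain ⟨v0⟩ : Nonempty (Fin n) := hconn.nonempty
  -- span = ker
  have hker : S = LinearMap.ker φ := by
    apply le_antisymm
    · rw [hS, Submodule.span_le]
      rintro x ⟨i, j, h, rfl⟩
      have hx : (fun k => (if k = i then (1:ℤ) else 0) + (if k = j then 1 else 0)) = E i + E j := by
        funext k; simp [hE, Pi.add_apply]
      simp only [SetLike.mem_coe, LinearMap.mem_ker, hx, map_add, hφE]
      rw [hεadj h]; ring
    · intro x hx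
      rw [LinearMap.mem_ker, hφval] at hx
      have key : ∀ i, E i - (ε i * ε v0) • E v0 ∈ S := fun i =>
        hwalk i v0 (hconn i v0).some
      have hx' : x = ∑ i, x i • E i := by
        funext k
        simp [hE, Finset.sum_apply, smul_eq_mul, mul_ite, Finset.sum_ite_eq', Finset.sum_ite_eq]
      have h0 : (∑ i, x i * (ε i * ε v0)) = 0 := by
        have : (∑ i, x i * (ε i * ε v0)) = (∑ i, ε i * x i) * ε v0 := by
          rw [Finset.sum_mul]; apply Finset.sum_congr rfl; intro i _; ring
        rw [this, hx, zero_mul]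
      have hsum : ∑ i, x i • (E i - (ε i * ε v0) • E v0) = x := by
        have : ∑ i, x i • (E i - (ε i * ε v0) • E v0)
            = (∑ i, x i • E i) - (∑ i, x i * (ε i * ε v0)) • E v0 := by
          rw [Finset.sum_smul]
          rw [← Finset.sum_sub_distrib]
          apply Finset.sum_congr rfl
          intro i _
          rw [smul_sub, smul_smul]
        rw [this, h0, zero_smul, sub_zero, ← hx']
      rw [← hsum]
      exact Submodule.sum_mem _ fun i _ => S.smul_mem _ (key i)
  -- surjectivity
  have hsurj : Function.Surjective φ := by
    intro m
    refine ⟨m • (ε v0 • E v0), ?_⟩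
    rw [map_smul, map_smul, hφE, smul_eq_mul, smul_eq_mul, hε1, mul_one]
  exact ⟨((Submodule.quotEquivOfEq _ _ hker).trans
    (φ.quotKerEquivOfSurjective hsurj)).toAddEquiv⟩
end

section
/- Let G be a graph without isolated vertices on vertex set X = {x_1,...,x_n}, n ≥ 2, and let G' be its complement. Then the Alexander dual ideal I(G')^∨ equals the ideal I(G)^* generated by {x_1⋯x_n/(x_i x_j) : {x_i,x_j} an edge of G} if and only if G contains no triangle. -/
/-!
A set `C` meets every edge of `Gᶜ` iff `Cᶜ` is a clique of `G`, so the minimal vertex covers of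
`Gᶜ` are the complements of the maximal cliques of `G`, and the claim becomes: the maximal cliques
of `G` are exactly its edges iff `G` is triangle-free. A triangle extends to a maximal clique with
at least three vertices. Conversely, in a triangle-free graph no vertex is adjacent to both ends of
an edge, so edges are maximal cliques, and a maximal clique has at least two vertices because
every vertex lies on an edge.
-/

/-- `C` is a vertex cover of `G`: it meets every edge. -/
def IsVertexCover {V : Type*} (G : SimpleGraph V) (C : Set V) : Prop :=
  ∀ a b, G.Adj a b → a ∈ C ∨ b ∈ C

/-- `C` is a minimal vertex cover of `G`. -/
def IsMinVertexCover {V : Type*} (G : SimpleGraph V) (C : Set V) : Prop :=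
  IsVertexCover G C ∧ ∀ D : Set V, D ⊆ C → IsVertexCover G D → D = C

section

variable {V : Type*} {G : SimpleGraph V}

theorem isVertexCover_compl_iff_isClique_compl {C : Set V} :
    IsVertexCover Gᶜ C ↔ G.IsClique Cᶜ := by
  refine ⟨fun hC a ha b hb hab => ?_, fun hC a b hab => ?_⟩
  · by_contra hadj
    exact (hC a b ⟨hab, hadj⟩).elim ha hb
  · by_contra! hab'
    exact hab.2 (hC hab'.1 hab'.2 hab.1)

theorem isMinVertexCover_compl_iff_maximal_isClique_compl {C : Set V} :
    IsMinVertexCover Gᶜ C ↔ Maximal G.IsClique Cᶜ := by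
  simp only [IsMinVertexCover, isVertexCover_compl_iff_isClique_compl]
  refine ⟨fun ⟨hC, hmin⟩ => ⟨hC, fun K hK hCK => ?_⟩,
    fun ⟨hC, hmax⟩ => ⟨hC, fun D hDC hD => ?_⟩⟩
  · rw [← hmin Kᶜ (Set.compl_subset_comm.mp hCK) (by rwa [compl_compl]), compl_compl]
  · exact hDC.antisymm (Set.compl_subset_compl.mp (hmax hD (Set.compl_subset_compl.mpr hDC)))

namespace SimpleGraph

theorem maximal_isClique_pair_of_cliqueFree_three (hG : G.CliqueFree 3) {a b : V}
    (hab : G.Adj a b) : Maximal G.IsClique {a, b} := by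
  classical
  refine ⟨isClique_pair.mpr fun _ => hab, fun K hK habK c hc => ?_⟩
  by_contra hcab
  simp only [Set.mem_insert_iff, Set.mem_singleton_iff, not_or] at hcab
  have ha : a ∈ K := habK (Set.mem_insert a {b})
  have hb : b ∈ K := habK (Set.mem_insert_of_mem a rfl)
  exact hG {a, b, c} (is3Clique_triple_iff.mpr
    ⟨hab, hK ha hc (Ne.symm hcab.1), hK hb hc (Ne.symm hcab.2)⟩)

theorem exists_adj_mem_of_maximal_isClique [Nonempty V] (hG : ∀ v, ∃ w, G.Adj v w) {K : Set V}
    (hK : Maximal G.IsClique K) : ∃ a b, G.Adj a b ∧ a ∈ K ∧ b ∈ K := by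
  have hedge : ∀ v w, G.Adj v w → K ⊆ {v, w} → v ∈ K ∧ w ∈ K := fun v w hvw hKvw =>
    have hvwK := hK.2 (isClique_pair.mpr fun _ => hvw) hKvw
    ⟨hvwK (Set.mem_insert v {w}), hvwK (Set.mem_insert_of_mem v rfl)⟩
  obtain ⟨v, hv⟩ : K.Nonempty := by
    by_contra! hKe
    obtain ⟨v⟩ := ‹Nonempty V›
    obtain ⟨w, hvw⟩ := hG v
    simpa [hKe] using (hedge v w hvw (by simp [hKe])).1
  by_cases hKv : ∃ u ∈ K, u ≠ v
  · obtain ⟨u, hu, huv⟩ := hKv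
    exact ⟨u, v, hK.1 hu hv huv, hu, hv⟩
  · push Not at hKv
    obtain ⟨w, hvw⟩ := hG v
    exact ⟨v, w, hvw, hedge v w hvw fun u hu => Or.inl (hKv u hu)⟩

theorem maximal_isClique_iff_of_cliqueFree_three [Nonempty V] (hG : ∀ v, ∃ w, G.Adj v w)
    (hfree : G.CliqueFree 3) {K : Set V} :
    Maximal G.IsClique K ↔ ∃ a b, G.Adj a b ∧ K = {a, b} := by
  refine ⟨fun hK => ?_, fun ⟨a, b, hab, hK⟩ =>
    hK ▸ maximal_isClique_pair_of_cliqueFree_three hfree hab⟩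
  obtain ⟨a, b, hab, ha, hb⟩ := exists_adj_mem_of_maximal_isClique hG hK
  have habK : {a, b} ⊆ K := Set.insert_subset ha (Set.singleton_subset_iff.mpr hb)
  have hKab := (maximal_isClique_pair_of_cliqueFree_three hfree hab).2 hK.1 habK
  exact ⟨a, b, hab, hKab.antisymm habK⟩

theorem cliqueFree_three_of_maximal_isClique_eq_pair [Finite V]
    (hG : ∀ K, Maximal G.IsClique K → ∃ a b : V, K = {a, b}) : G.CliqueFree 3 := by
  classical
  intro s hs
  obtain ⟨K, hsK, hK⟩ := Finite.exists_le_maximal (p := G.IsClique) hs.isClique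
  obtain ⟨a, b, rfl⟩ := hG K hK
  have hsab : s ⊆ {a, b} := fun x hx => by simpa using hsK hx
  have := (Finset.card_le_card hsab).trans Finset.card_le_two
  rw [hs.card_eq] at this
  omega

theorem maximal_isClique_iff_eq_edge_iff_cliqueFree_three [Finite V] [Nonempty V]
    (hG : ∀ v, ∃ w, G.Adj v w) :
    (∀ K, Maximal G.IsClique K ↔ ∃ a b, G.Adj a b ∧ K = {a, b}) ↔ G.CliqueFree 3 :=
  ⟨fun h => cliqueFree_three_of_maximal_isClique_eq_pair fun K hK =>
      let ⟨a, b, _, hK⟩ := (h K).mp hK; ⟨a, b, hK⟩,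
    fun hfree _ => maximal_isClique_iff_of_cliqueFree_three hG hfree⟩

end SimpleGraph

end

/-- combinatorial form of `I(G')^∨ = I(G)^*`: for a graph `G` on `n ≥ 2`
vertices without isolated vertices, the minimal vertex covers of the complement `G'` are
exactly the complements of the edges of `G` iff `G` is triangle-free. -/
theorem stmt10 (n : ℕ) (hn : 2 ≤ n) (G : SimpleGraph (Fin n))
    (hiso : ∀ v, ∃ w, G.Adj v w) :
    (∀ C : Set (Fin n), IsMinVertexCover Gᶜ C ↔
        ∃ a b, G.Adj a b ∧ C = ({a, b} : Set (Fin n))ᶜ) ↔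
      G.CliqueFree 3 := by
  have : Nonempty (Fin n) := ⟨⟨0, by omega⟩⟩
  rw [← SimpleGraph.maximal_isClique_iff_eq_edge_iff_cliqueFree_three hiso,
    compl_surjective.forall]
  simp only [isMinVertexCover_compl_iff_maximal_isClique_compl, compl_compl, compl_inj_iff]
end

section
/- Let w_1,...,w_r ∈ ℕ^n and ℓ_1,...,ℓ_p ∈ ℚ₊^n satisfy conv(w_1,...,w_r) = {x : x ≥ 0, ⟨x,ℓ_i⟩ ≤ 1 ∀i}, let d_i be the unique positive integer making (-d_iℓ_i, d_i) an integer vector with coprime nonzero entries, and suppose B = {(w_1,1),...,(w_r,1)} is a Hilbert basis of ℝ₊B with ℤB = ℤ^{n+1}. Then min{ b : ∃ a ∈ ℤ^n with a ≥ 1, d_i(b - ⟨a,ℓ_i⟩) ≥ 1 ∀i, (a,b) ∈ ℕB } = max_i ⌈ 1/d_i + |ℓ_i| ⌉, where |ℓ_i| = ⟨ℓ_i, 1⟩. (This computes minus the a-invariant of the normal semigroup ring K[ℕB].) -/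
/-- with `conv(w₁,…,w_r) = {x ≥ 0 : ⟨x,ℓᵢ⟩ ≤ 1 ∀i}`, `dᵢ` the unique
positive integer making `(-dᵢℓᵢ,dᵢ)` integral with coprime nonzero entries, and
`B = {(w₁,1),…,(w_r,1)}` a Hilbert basis with `ℤB = ℤ^{n+1}`, the minimum degree `b` of
a lattice point `(a,b)` in the relative interior of `ℝ₊B` (i.e. `a ≥ 1`,
`dᵢ(b - ⟨a,ℓᵢ⟩) ≥ 1` for all `i`, and `(a,b) ∈ ℕB`) equals `maxᵢ ⌈1/dᵢ + |ℓᵢ|⌉`;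
this is `-a(S)` for the normal semigroup ring `S = K[ℕB]`. -/
theorem stmt15 (n r p : ℕ) (hp : 0 < p)
    (w : Fin r → Fin n → ℕ) (ℓ : Fin p → Fin n → ℚ) (d : Fin p → ℕ)
    (hℓ : ∀ i j, 0 ≤ ℓ i j)
    (hd : ∀ i, 0 < d i)
    (hint : ∀ i, ∃ m : Fin n → ℤ, (∀ j, (m j : ℚ) = -(d i : ℚ) * ℓ i j) ∧
      Int.gcd (Finset.univ.gcd m) (d i : ℤ) = 1)
    (hconv : convexHull ℝ {x : Fin n → ℝ | ∃ k, x = fun j => (w k j : ℝ)} =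
      {x | (∀ j, 0 ≤ x j) ∧ ∀ i, ∑ j, x j * (ℓ i j : ℝ) ≤ 1})
    (hHB : ∀ z : Fin (n+1) → ℤ,
      (∃ c : Fin r → ℕ, z = ∑ k, c k • (Fin.snoc (fun j => (w k j : ℤ)) 1 : Fin (n+1) → ℤ)) ↔
        ∃ t : Fin r → ℝ, (∀ k, 0 ≤ t k) ∧
          (fun i => (z i : ℝ)) = ∑ k, t k • (Fin.snoc (fun j => (w k j : ℝ)) 1 : Fin (n+1) → ℝ))
    (hfull : ∀ z : Fin (n+1) → ℤ,
      ∃ c : Fin r → ℤ, z = ∑ k, c k • (Fin.snoc (fun j => (w k j : ℤ)) 1 : Fin (n+1) → ℤ)) :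
    IsLeast {b : ℤ | ∃ a : Fin n → ℤ, (∀ j, 1 ≤ a j) ∧
        (∀ i, 1 ≤ (d i : ℚ) * ((b : ℚ) - ∑ j, (a j : ℚ) * ℓ i j)) ∧
        (∃ c : Fin r → ℕ,
          (Fin.snoc a b : Fin (n+1) → ℤ) =
            ∑ k, c k • (Fin.snoc (fun j => (w k j : ℤ)) 1 : Fin (n+1) → ℤ))}
      (Finset.univ.sup' (Finset.univ_nonempty_iff.mpr ⟨⟨0, hp⟩⟩)
        (fun i => ⌈(1 : ℚ) / (d i : ℚ) + ∑ j, ℓ i j⌉)) := by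
  set M : ℤ := Finset.univ.sup' (Finset.univ_nonempty_iff.mpr ⟨⟨0, hp⟩⟩)
      (fun i => ⌈(1 : ℚ) / (d i : ℚ) + ∑ j, ℓ i j⌉) with hMdef
  have hdQ : ∀ i, (0 : ℚ) < (d i : ℚ) := fun i => by exact_mod_cast hd i
  have hMi : ∀ i, (1 : ℚ) / (d i : ℚ) + ∑ j, ℓ i j ≤ (M : ℚ) := by
    intro i
    refine le_trans (Int.le_ceil _) ?_
    exact_mod_cast Finset.le_sup' (fun i => ⌈(1 : ℚ) / (d i : ℚ) + ∑ j, ℓ i j⌉)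
      (Finset.mem_univ i)
  have hMpos : (0 : ℚ) < (M : ℚ) := by
    have h := hMi ⟨0, hp⟩
    have h1 : 0 < (1 : ℚ) / (d ⟨0, hp⟩ : ℚ) := div_pos one_pos (hdQ _)
    have h2 : 0 ≤ ∑ j, ℓ ⟨0, hp⟩ j := Finset.sum_nonneg fun j _ => hℓ _ j
    linarith
  have hMposZ : (0 : ℤ) < M := by exact_mod_cast hMpos
  constructor
  · -- membership
    refine ⟨fun _ => 1, fun j => le_refl 1, ?_, ?_⟩
    · intro i
      have key : (1 : ℚ) / (d i : ℚ) ≤ (M : ℚ) - ∑ j, ((1 : ℤ) : ℚ) * ℓ i j := by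
        have := hMi i
        simp only [Int.cast_one, one_mul]
        linarith
      have hne : (d i : ℚ) ≠ 0 := ne_of_gt (hdQ i)
      calc (1 : ℚ) = (d i : ℚ) * ((1 : ℚ) / (d i : ℚ)) := by field_simp
        _ ≤ (d i : ℚ) * ((M : ℚ) - ∑ j, ((1 : ℤ) : ℚ) * ℓ i j) :=
          mul_le_mul_of_nonneg_left key (le_of_lt (hdQ i))
    · -- semigroup membership via hHB
      apply (hHB (Fin.snoc (fun _ => 1) M)).mpr
      -- the point (1/M,...,1/M) is in the polytope
      have hMR : (0 : ℝ) < (M : ℝ) := by exact_mod_cast hMposZ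
      have hxmem : (fun _ : Fin n => ((M : ℝ))⁻¹) ∈
          {x : Fin n → ℝ | (∀ j, 0 ≤ x j) ∧ ∀ i, ∑ j, x j * (ℓ i j : ℝ) ≤ 1} := by
        constructor
        · intro j; positivity
        · intro i
          have hQ : (∑ j, ℓ i j : ℚ) ≤ (M : ℚ) := by
            have h1 : 0 < (1 : ℚ) / (d i : ℚ) := div_pos one_pos (hdQ i)
            have := hMi i; linarith
          have hR : (∑ j, (ℓ i j : ℝ)) ≤ (M : ℝ) := by exact_mod_cast hQ
          calc ∑ j, ((M : ℝ))⁻¹ * (ℓ i j : ℝ)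
              = ((M : ℝ))⁻¹ * ∑ j, (ℓ i j : ℝ) := by rw [Finset.mul_sum]
            _ ≤ ((M : ℝ))⁻¹ * (M : ℝ) :=
                mul_le_mul_of_nonneg_left hR (by positivity)
            _ = 1 := by field_simp
      rw [← hconv] at hxmem
      have hset : {x : Fin n → ℝ | ∃ k, x = fun j => (w k j : ℝ)} =
          Set.range (fun k => fun j => (w k j : ℝ)) := by
        ext x; constructor
        · rintro ⟨k, rfl⟩; exact ⟨k, rfl⟩
        · rintro ⟨k, rfl⟩; exact ⟨k, rfl⟩
      rw [hset, convexHull_range_eq_exists_affineCombination] at hxmem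
      obtain ⟨s, t, ht0, ht1, hx⟩ := hxmem
      rw [Finset.affineCombination_eq_linear_combination _ _ _ ht1] at hx
      refine ⟨fun k => (M : ℝ) * (if k ∈ s then t k else 0), ?_, ?_⟩
      · intro k
        by_cases hk : k ∈ s
        · simp only [if_pos hk]
          exact mul_nonneg (le_of_lt hMR) (ht0 k hk)
        · simp [if_neg hk]
      · funext i
        rw [Finset.sum_apply]
        refine Fin.lastCases ?_ ?_ i
        · -- last coordinate
          simp only [Fin.snoc_last, Pi.smul_apply, smul_eq_mul, mul_one]
          have : ∑ k : Fin r, (M : ℝ) * (if k ∈ s then t k else 0)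
              = (M : ℝ) * ∑ k ∈ s, t k := by
            rw [← Finset.mul_sum]
            congr 1
            rw [← Finset.sum_subset s.subset_univ (fun k _ hk => by simp [if_neg hk])]
            exact Finset.sum_congr rfl fun k hk => if_pos hk
          rw [this, ht1, mul_one]
        · -- first n coordinates
          intro j
          simp only [Fin.snoc_castSucc, Pi.smul_apply, smul_eq_mul, Int.cast_one]
          have hxj := congrFun hx j
          rw [Finset.sum_apply] at hxj
          simp only [Pi.smul_apply, smul_eq_mul] at hxj
          have : ∑ k : Fin r, (M : ℝ) * (if k ∈ s then t k else 0) * (w k j : ℝ)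
              = (M : ℝ) * ∑ k ∈ s, t k * (w k j : ℝ) := by
            rw [Finset.mul_sum]
            rw [← Finset.sum_subset s.subset_univ (fun k _ hk => by simp [if_neg hk])]
            refine Finset.sum_congr rfl fun k hk => ?_
            rw [if_pos hk]; ring
          rw [this, hxj]
          field_simp
  · -- lower bound
    rintro b ⟨a, ha, hb, -⟩
    rw [hMdef]
    apply Finset.sup'_le
    intro i _
    rw [Int.ceil_le]
    have haQ : ∀ j, (1 : ℚ) ≤ (a j : ℚ) := fun j => by exact_mod_cast ha j
    have hsum : (∑ j, ℓ i j) ≤ ∑ j, (a j : ℚ) * ℓ i j := by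
      refine Finset.sum_le_sum fun j _ => ?_
      exact le_mul_of_one_le_left (hℓ i j) (haQ j)
    have h1 : (1 : ℚ) / (d i : ℚ) ≤ (b : ℚ) - ∑ j, (a j : ℚ) * ℓ i j := by
      rw [div_le_iff₀ (hdQ i)]
      have := hb i
      nlinarith [hdQ i]
    push_cast
    linarith
end

section
/- Let G be a connected graph with incidence matrix A whose column set is A = {v_1,...,v_q}. If the set B = {(v_1,1),...,(v_q,1),(0,1)} ⊆ ℤ^{n+1} is a Hilbert basis (equivalently, the system xA ≤ 1 has the integer rounding property), then G is bipartite. -/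
/-- The family `B = {(v₁,1),…,(v_q,1),(0,1)} ⊆ ℤ^{n+1}` built from the columns of a
nonnegative integer matrix `A`. -/
def liftCols {n q : ℕ} (A : Matrix (Fin n) (Fin q) ℕ) : Option (Fin q) → Fin (n+1) → ℤ :=
  fun o => o.elim (Fin.snoc (0 : Fin n → ℤ) 1)
    (fun k => Fin.snoc (fun i => (A i k : ℤ)) 1)

/-- Along a walk from `a` to `b`, the sum of the corresponding columns of the incidence
matrix equals `χ_a + χ_b` plus twice an integer vector, and the total number of columns
used (with multiplicity) is the length of the walk. -/
lemma walk_decomp {n q : ℕ} {G : SimpleGraph (Fin n)} {A : Matrix (Fin n) (Fin q) ℕ}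
    (hall : ∀ i j, G.Adj i j → ∃ k,
      ∀ l, A l k = (if l = i then 1 else 0) + (if l = j then 1 else 0))
    {a b : Fin n} (w : G.Walk a b) :
    ∃ (c : Fin q → ℕ) (m : Fin n → ℤ),
      (∀ l, (∑ k, (c k : ℤ) * A l k) =
        (if l = a then 1 else 0) + (if l = b then 1 else 0) + 2 * m l) ∧
      ∑ k, c k = w.length := by
  induction w with
  | @nil u =>
    refine ⟨0, fun l => -(if l = u then 1 else 0), ?_, by simp⟩
    intro l
    by_cases h : l = u <;> simp [h]
  | @cons a b b' h p ih =>
    obtain ⟨c, m, hc, hs⟩ := ih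
    obtain ⟨k0, hk0⟩ := hall a b h
    refine ⟨fun k => c k + if k = k0 then 1 else 0,
      fun l => m l + (if l = b then 1 else 0), ?_, ?_⟩
    · intro l
      have h1 : ∑ k, ((c k + if k = k0 then 1 else 0 : ℕ) : ℤ) * A l k
          = (∑ k, (c k : ℤ) * A l k) + (A l k0 : ℤ) := by
        push_cast
        simp [add_mul, Finset.sum_add_distrib, ite_mul, Finset.sum_ite_eq']
      rw [h1, hc l, hk0 l]
      push_cast
      ring
    · rw [Finset.sum_add_distrib, hs]
      simp [SimpleGraph.Walk.length_cons]

/-- Every column of the incidence matrix sums to `2`. -/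
lemma col_sum_two {n q : ℕ} {G : SimpleGraph (Fin n)} {A : Matrix (Fin n) (Fin q) ℕ}
    (hcol : ∀ k, ∃ i j, G.Adj i j ∧
      ∀ l, A l k = (if l = i then 1 else 0) + (if l = j then 1 else 0))
    (k : Fin q) : ∑ l, (A l k : ℤ) = 2 := by
  obtain ⟨i, j, hij, hA⟩ := hcol k
  have hne : i ≠ j := hij.ne
  simp only [hA]
  push_cast
  rw [Finset.sum_add_distrib]
  simp [Finset.sum_ite_eq', hne]

/-- If `liftCols A` is a Hilbert basis then every closed walk of `G` has even length. -/
lemma even_closed {n q : ℕ} {G : SimpleGraph (Fin n)} {A : Matrix (Fin n) (Fin q) ℕ}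
    (hcolsum : ∀ k, ∑ l, (A l k : ℤ) = 2)
    (hHB : IsHilbertBasisFam (liftCols A))
    (hdecomp : ∀ {a b : Fin n} (w : G.Walk a b),
      ∃ (c : Fin q → ℕ) (m : Fin n → ℤ),
        (∀ l, (∑ k, (c k : ℤ) * A l k) =
          (if l = a then 1 else 0) + (if l = b then 1 else 0) + 2 * m l) ∧
        ∑ k, c k = w.length)
    (a : Fin n) (w : G.Walk a a) : Even w.length := by
  by_contra hodd
  rw [Nat.not_even_iff_odd] at hodd
  obtain ⟨s, hs⟩ := hodd
  obtain ⟨c, m, hc, hlen⟩ := hdecomp w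
  rw [hs] at hlen
  set z : Fin (n+1) → ℤ :=
    Fin.snoc (fun l => (if l = a then 1 else 0) + m l) (s+1) with hz
  have hcsumR : (∑ k : Fin q, (c k : ℝ)) = 2*(s:ℝ)+1 := by
    have h := congrArg (fun x : ℕ => (x : ℝ)) hlen
    push_cast at h
    linarith
  have hreal : ∃ t : Option (Fin q) → ℝ, (∀ i, 0 ≤ t i) ∧
      (fun j => (z j : ℝ)) = ∑ i, t i • fun j => ((liftCols A i j : ℝ)) := by
    refine ⟨fun o => o.elim (1/2) (fun k => (c k : ℝ)/2), ?_, ?_⟩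
    · rintro (_|k) <;> simp <;> positivity
    · funext j
      rw [Finset.sum_apply, Fintype.sum_option]
      refine Fin.lastCases ?_ ?_ j
      · simp only [hz, Fin.snoc_last, liftCols, Option.elim, Pi.smul_apply,
          smul_eq_mul, mul_one]
        push_cast
        have hh : ∑ x : Fin q, (c x : ℝ)/2 * 1 = (∑ x : Fin q, (c x : ℝ))/2 := by
          rw [Finset.sum_div]; congr 1; funext x; ring
        rw [hh, hcsumR]; ring
      · intro l
        simp only [hz, Fin.snoc_castSucc, liftCols, Option.elim, Pi.smul_apply,
          smul_eq_mul, Pi.zero_apply, mul_zero]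
        have hcrR : ∑ k : Fin q, (c k : ℝ) * (A l k : ℝ)
            = ((if l = a then (1:ℝ) else 0) + (if l = a then 1 else 0) + 2 * (m l : ℝ)) := by
          have h := congrArg (fun x : ℤ => (x : ℝ)) (hc l)
          push_cast at h
          split_ifs with hla <;> simpa [hla] using h
        have hhalf : ∑ k : Fin q, (c k : ℝ)/2 * (A l k : ℝ)
            = (∑ k : Fin q, (c k : ℝ) * (A l k : ℝ))/2 := by
          rw [Finset.sum_div]; congr 1; funext k; ring
        push_cast
        rw [hhalf, hcrR]
        split_ifs with hla <;> push_cast <;> ring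
  obtain ⟨d, hd⟩ := (hHB z).mpr hreal
  have key : ∀ l : Fin n, z (Fin.castSucc l) = ∑ k : Fin q, (d (some k) : ℤ) * A l k := by
    intro l
    rw [hd, Finset.sum_apply, Fintype.sum_option]
    simp [liftCols, Fin.snoc_castSucc, mul_comm]
  have h1 : ∑ l, z (Fin.castSucc l) = 2 * ∑ k : Fin q, (d (some k) : ℤ) := by
    simp only [key]
    rw [Finset.sum_comm, Finset.mul_sum]
    refine Finset.sum_congr rfl fun k _ => ?_
    rw [← Finset.mul_sum, hcolsum k]
    ring
  have h2 : ∑ l, z (Fin.castSucc l) = 1 + ∑ l, m l := by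
    simp only [hz, Fin.snoc_castSucc]
    rw [Finset.sum_add_distrib]
    simp [Finset.sum_ite_eq']
  have h3 : 2 * (∑ k, (c k : ℤ)) = 2 + 2 * ∑ l, m l := by
    have h := Finset.sum_congr rfl (fun l (_ : l ∈ (Finset.univ : Finset (Fin n))) => hc l)
    rw [Finset.sum_comm] at h
    simp only [← Finset.mul_sum] at h
    simp only [hcolsum] at h
    have hR : ∑ l : Fin n, ((if l = a then (1:ℤ) else 0) + (if l = a then 1 else 0) + 2 * m l)
        = 2 + 2 * ∑ l, m l := by
      rw [Finset.sum_add_distrib, Finset.sum_add_distrib, ← Finset.mul_sum]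
      simp [Finset.sum_ite_eq']
    rw [hR, ← Finset.sum_mul] at h
    linarith [h]
  have h4 : (∑ k, (c k : ℤ)) = 2 * s + 1 := by
    have h := congrArg (fun x : ℕ => (x : ℤ)) hlen
    push_cast at h
    linarith
  omega

/-- let `A` be the incidence matrix of a connected graph `G`. If
`B = {(v₁,1),…,(v_q,1),(0,1)}` is a Hilbert basis (equivalently, the system `xA ≤ 1`
has the integer rounding property), then `G` is bipartite. -/
theorem stmt19 (n q : ℕ) (G : SimpleGraph (Fin n)) (hconn : G.Connected)
    (A : Matrix (Fin n) (Fin q) ℕ)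
    (hcol : ∀ k, ∃ i j, G.Adj i j ∧
      ∀ l, A l k = (if l = i then 1 else 0) + (if l = j then 1 else 0))
    (hall : ∀ i j, G.Adj i j → ∃ k,
      ∀ l, A l k = (if l = i then 1 else 0) + (if l = j then 1 else 0))
    (hHB : IsHilbertBasisFam (liftCols A)) :
    G.Colorable 2 := by
  have heven : ∀ (a : Fin n) (w : G.Walk a a), Even w.length :=
    even_closed (col_sum_two hcol) hHB (fun {a b} w => walk_decomp hall w)
  have hne : Nonempty (Fin n) := hconn.nonempty
  obtain ⟨v0⟩ := hne
  refine ⟨SimpleGraph.Coloring.mk (fun i => ⟨G.dist v0 i % 2, Nat.mod_lt _ (by norm_num)⟩) ?_⟩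
  intro i j hadj hcontra
  have hmod : G.dist v0 i % 2 = G.dist v0 j % 2 := by
    simpa using congrArg Fin.val hcontra
  obtain ⟨p, hp⟩ := (hconn.preconnected v0 i).exists_walk_length_eq_dist
  obtain ⟨r, hr⟩ := (hconn.preconnected v0 j).exists_walk_length_eq_dist
  have hw := heven v0 (p.append ((SimpleGraph.Walk.cons hadj r.reverse)))
  rw [SimpleGraph.Walk.length_append, SimpleGraph.Walk.length_cons,
    SimpleGraph.Walk.length_reverse] at hw
  rw [hp, hr] at hw
  obtain ⟨t, ht⟩ := hw
  omega
end
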